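/- arXiv:1911.11077 — 5 statements merged into one kernel-verified Lean document; each statement's English description precedes it below -/
import Mathlib

section
/- Let F : [0,∞) → [0,∞) be continuous and decreasing. For any σ > 0 and θ ∈ (0,1), one has ∫₀ᵗ e^{-σ(t-τ)} F(τ) dτ ≤ (1/σ)(F(0) e^{-(1-θ)σt} + F(θt)) for all t ≥ 0. -/
lemma exp_int_aux (σ t p q : ℝ) (hσ : σ ≠ 0) :
    ∫ τ in p..q, Real.exp (-σ * (t - τ)) =
      (Real.exp (-σ * (t - q)) - Real.exp (-σ * (t - p))) / σ := by
  have h : ∀ x ∈ Set.uIcc p q, HasDerivAt (fun τ => Real.exp (-σ * (t - τ)) / σ)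
      (Real.exp (-σ * (t - x))) x := by
    intro x _
    have h1 : HasDerivAt (fun τ : ℝ => -σ * (t - τ)) σ x := by
      have := ((hasDerivAt_id x).const_sub t).const_mul (-σ)
      simpa using this
    have h2 := (Real.hasDerivAt_exp (-σ * (t - x))).comp x h1
    have h3 := h2.div_const σ
    simpa [mul_div_assoc, mul_div_cancel_right₀, hσ] using h3
  have hint : IntervalIntegrable (fun x => Real.exp (-σ * (t - x)))
      MeasureTheory.volume p q :=
    (Continuous.intervalIntegrable (by continuity) p q)
  rw [intervalIntegral.integral_eq_sub_of_hasDerivAt h hint]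
  ring

/-- for continuous decreasing `F : [0,∞) → [0,∞)`, any `σ > 0`, `θ ∈ (0,1)`,
`∫₀ᵗ e^{-σ(t-τ)} F(τ) dτ ≤ (1/σ)(F(0) e^{-(1-θ)σ t} + F(θ t))` for all `t ≥ 0`. -/
theorem stmt1 (F : ℝ → ℝ) (hFcont : ContinuousOn F (Set.Ici 0))
    (hFdec : AntitoneOn F (Set.Ici 0)) (hFnonneg : ∀ t ≥ (0:ℝ), 0 ≤ F t)
    (σ θ : ℝ) (hσ : 0 < σ) (hθ : θ ∈ Set.Ioo (0:ℝ) 1) :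
    ∀ t ≥ (0:ℝ),
      (∫ τ in (0:ℝ)..t, Real.exp (-σ * (t - τ)) * F τ) ≤
        (1 / σ) * (F 0 * Real.exp (-(1 - θ) * σ * t) + F (θ * t)) := by
  intro t ht
  obtain ⟨hθ0, hθ1⟩ := hθ
  set a := θ * t with ha
  have ha0 : 0 ≤ a := mul_nonneg hθ0.le ht
  have hat : a ≤ t := by nlinarith
  have hσ' : σ ≠ 0 := ne_of_gt hσ
  -- continuity of the integrand on [0, t]
  have hcont : ContinuousOn (fun τ => Real.exp (-σ * (t - τ)) * F τ) (Set.Icc 0 t) := by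
    apply ContinuousOn.mul
    · exact (Continuous.continuousOn (by continuity))
    · exact hFcont.mono (fun x hx => hx.1)
  have hint1 : IntervalIntegrable (fun τ => Real.exp (-σ * (t - τ)) * F τ)
      MeasureTheory.volume 0 a := by
    apply ContinuousOn.intervalIntegrable
    apply hcont.mono
    rw [Set.uIcc_of_le ha0]
    exact Set.Icc_subset_Icc le_rfl hat
  have hint2 : IntervalIntegrable (fun τ => Real.exp (-σ * (t - τ)) * F τ)
      MeasureTheory.volume a t := by
    apply ContinuousOn.intervalIntegrable
    apply hcont.mono
    rw [Set.uIcc_of_le hat]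
    exact Set.Icc_subset_Icc ha0 le_rfl
  have hsplit : (∫ τ in (0:ℝ)..t, Real.exp (-σ * (t - τ)) * F τ) =
      (∫ τ in (0:ℝ)..a, Real.exp (-σ * (t - τ)) * F τ) +
      (∫ τ in a..t, Real.exp (-σ * (t - τ)) * F τ) :=
    (intervalIntegral.integral_add_adjacent_intervals hint1 hint2).symm
  -- bound on first piece
  have hb1 : (∫ τ in (0:ℝ)..a, Real.exp (-σ * (t - τ)) * F τ) ≤
      F 0 * ((Real.exp (-σ * (t - a)) - Real.exp (-σ * (t - 0))) / σ) := by
    have hmono : (∫ τ in (0:ℝ)..a, Real.exp (-σ * (t - τ)) * F τ) ≤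
        (∫ τ in (0:ℝ)..a, Real.exp (-σ * (t - τ)) * F 0) := by
      apply intervalIntegral.integral_mono_on ha0 hint1
      · exact (Continuous.intervalIntegrable (by continuity) 0 a)
      · intro x hx
        have hFx : F x ≤ F 0 := hFdec (le_refl (0:ℝ)) hx.1 hx.1
        exact mul_le_mul_of_nonneg_left hFx (Real.exp_pos _).le
    calc (∫ τ in (0:ℝ)..a, Real.exp (-σ * (t - τ)) * F τ)
        ≤ ∫ τ in (0:ℝ)..a, Real.exp (-σ * (t - τ)) * F 0 := hmono
      _ = F 0 * ∫ τ in (0:ℝ)..a, Real.exp (-σ * (t - τ)) := by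
          rw [← intervalIntegral.integral_const_mul]; congr 1; ext τ; ring
      _ = F 0 * ((Real.exp (-σ * (t - a)) - Real.exp (-σ * (t - 0))) / σ) := by
          rw [exp_int_aux σ t 0 a hσ']
  -- bound on second piece
  have hb2 : (∫ τ in a..t, Real.exp (-σ * (t - τ)) * F τ) ≤
      F a * ((Real.exp (-σ * (t - t)) - Real.exp (-σ * (t - a))) / σ) := by
    have hmono : (∫ τ in a..t, Real.exp (-σ * (t - τ)) * F τ) ≤
        (∫ τ in a..t, Real.exp (-σ * (t - τ)) * F a) := by
      apply intervalIntegral.integral_mono_on hat hint2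
      · exact (Continuous.intervalIntegrable (by continuity) a t)
      · intro x hx
        have hFx : F x ≤ F a := hFdec ha0 (le_trans ha0 hx.1) hx.1
        exact mul_le_mul_of_nonneg_left hFx (Real.exp_pos _).le
    calc (∫ τ in a..t, Real.exp (-σ * (t - τ)) * F τ)
        ≤ ∫ τ in a..t, Real.exp (-σ * (t - τ)) * F a := hmono
      _ = F a * ∫ τ in a..t, Real.exp (-σ * (t - τ)) := by
          rw [← intervalIntegral.integral_const_mul]; congr 1; ext τ; ring
      _ = F a * ((Real.exp (-σ * (t - t)) - Real.exp (-σ * (t - a))) / σ) := by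
          rw [exp_int_aux σ t a t hσ']
  -- combine
  have hexp_eq : Real.exp (-σ * (t - a)) = Real.exp (-(1 - θ) * σ * t) := by
    congr 1; rw [ha]; ring
  have hF0 : 0 ≤ F 0 := hFnonneg 0 le_rfl
  have hFa : 0 ≤ F a := hFnonneg a ha0
  have he1 : 0 < Real.exp (-σ * (t - 0)) := Real.exp_pos _
  have he2 : 0 < Real.exp (-σ * (t - a)) := Real.exp_pos _
  have he3 : Real.exp (-σ * (t - t)) = 1 := by simp
  rw [hsplit]
  have := add_le_add hb1 hb2
  rw [hexp_eq, he3] at this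
  calc _ ≤ _ := this
    _ ≤ (1 / σ) * (F 0 * Real.exp (-(1 - θ) * σ * t) + F a) := by
        rw [← hexp_eq]
        have h1 : F 0 * ((Real.exp (-σ * (t - a)) - Real.exp (-σ * (t - 0))) / σ)
            ≤ (1 / σ) * (F 0 * Real.exp (-σ * (t - a))) := by
          have e : (Real.exp (-σ * (t - a)) - Real.exp (-σ * (t - 0))) / σ
              ≤ Real.exp (-σ * (t - a)) / σ :=
            (div_le_div_iff_of_pos_right hσ).mpr (by linarith)
          calc F 0 * ((Real.exp (-σ * (t - a)) - Real.exp (-σ * (t - 0))) / σ)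
              ≤ F 0 * (Real.exp (-σ * (t - a)) / σ) := mul_le_mul_of_nonneg_left e hF0
            _ = (1 / σ) * (F 0 * Real.exp (-σ * (t - a))) := by ring
        have h2 : F a * ((1 - Real.exp (-σ * (t - a))) / σ) ≤ (1 / σ) * F a := by
          have e : (1 - Real.exp (-σ * (t - a))) / σ ≤ 1 / σ :=
            (div_le_div_iff_of_pos_right hσ).mpr (by linarith)
          calc F a * ((1 - Real.exp (-σ * (t - a))) / σ)
              ≤ F a * (1 / σ) := mul_le_mul_of_nonneg_left e hFa
            _ = (1 / σ) * F a := by ring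
        linarith
end

section
/- Let m ∈ ℤ≥0, λ > 0, σ > 0, and T* > E_m(0). Then there exists C > 0 such that for all t ≥ 0, ∫₀ᵗ e^{-σ(t-τ)} L_m(T*+τ)^{-λ} dτ ≤ C · L_m(T*+t)^{-λ}, where L_m is the m-th iterated logarithm (L_0(s)=s) and E_m the m-th iterated exponential. -/
/-- The iterated exponential: `E 0 t = t`, `E (m+1) t = exp (E m t)`. -/
noncomputable def itExp : ℕ → ℝ → ℝ
  | 0 => fun t => t
  | m + 1 => fun t => Real.exp (itExp m t)

/-- The iterated logarithm: `L 0 t = t`, `L (m+1) t = log (L m t)`. -/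
noncomputable def itLog : ℕ → ℝ → ℝ
  | 0 => fun t => t
  | m + 1 => fun t => Real.log (itLog m t)

lemma itExp_lt_succ (m : ℕ) : itExp m 0 < itExp (m+1) 0 := by
  have h := Real.add_one_le_exp (itExp m 0)
  simp only [itExp]
  linarith

lemma lem1 : ∀ m k : ℕ, ∀ s : ℝ, itExp (m+k) 0 < s → itExp k 0 < itLog m s := by
  intro m
  induction m with
  | zero => intro k s h; simpa [itLog] using h
  | succ m ih =>
    intro k s h
    have h' : itExp (m + (k+1)) 0 < s := by
      have : m + 1 + k = m + (k+1) := by omega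
      rwa [this] at h
    have h2 : itExp (k+1) 0 < itLog m s := ih (k+1) s h'
    have h3 : Real.exp (itExp k 0) < itLog m s := by simpa [itExp] using h2
    have h4 : Real.log (Real.exp (itExp k 0)) < Real.log (itLog m s) :=
      Real.log_lt_log (Real.exp_pos _) h3
    simpa [itLog, Real.log_exp] using h4

lemma itLog_pos {m : ℕ} {s : ℝ} (h : itExp m 0 < s) : 0 < itLog m s := by
  have := lem1 m 0 s (by simpa using h)
  simpa [itExp] using this

lemma itLog_one_lt {m : ℕ} {s : ℝ} (h : itExp (m+1) 0 < s) : 1 < itLog m s := by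
  have := lem1 m 1 s (by rwa [show m + 1 = m + 1 from rfl])
  simpa [itExp] using this

lemma lem2 : ∀ m : ℕ, ∀ a s : ℝ, itExp m 0 < a → a ≤ s →
    itLog m a ≤ itLog m s ∧ itLog m s ≤ itLog m a + (s - a) := by
  intro m
  induction m with
  | zero => intro a s _ has; constructor <;> simp [itLog] <;> linarith
  | succ m ih =>
    intro a s ha has
    have h1 : itExp m 0 < a := lt_trans (itExp_lt_succ m) ha
    obtain ⟨hmono, hlip⟩ := ih a s h1 has
    have hga : 1 < itLog m a := itLog_one_lt ha
    have hgs : 1 < itLog m s := lt_of_lt_of_le hga hmono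
    have hane : itLog m a ≠ 0 := by linarith
    have hsne : itLog m s ≠ 0 := by linarith
    have hlog_mono : Real.log (itLog m a) ≤ Real.log (itLog m s) :=
      Real.log_le_log (by linarith) hmono
    have key : Real.log (itLog m s) - Real.log (itLog m a) ≤ itLog m s - itLog m a := by
      have h5 : Real.log (itLog m s / itLog m a) ≤ itLog m s / itLog m a - 1 :=
        Real.log_le_sub_one_of_pos (by positivity)
      rw [Real.log_div hsne hane] at h5
      have h6 : itLog m s / itLog m a - 1 = (itLog m s - itLog m a) / itLog m a := by
        field_simp
      have h7 : (itLog m s - itLog m a) / itLog m a ≤ itLog m s - itLog m a := by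
        rw [div_le_iff₀ (by linarith)]
        nlinarith
      linarith
    constructor
    · simpa [itLog] using hlog_mono
    · show Real.log (itLog m s) ≤ Real.log (itLog m a) + (s - a)
      linarith

lemma itLog_continuousOn : ∀ m : ℕ, ContinuousOn (itLog m) (Set.Ioi (itExp m 0)) := by
  intro m
  induction m with
  | zero => exact continuousOn_id
  | succ m ih =>
    have hsub : Set.Ioi (itExp (m+1) 0) ⊆ Set.Ioi (itExp m 0) := by
      intro x hx
      exact lt_trans (itExp_lt_succ m) hx
    have h1 : ContinuousOn (itLog m) (Set.Ioi (itExp (m+1) 0)) := ih.mono hsub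
    show ContinuousOn (fun s => Real.log (itLog m s)) (Set.Ioi (itExp (m+1) 0))
    apply Real.continuousOn_log.comp h1
    intro x hx
    have : 1 < itLog m x := itLog_one_lt hx
    simp only [Set.mem_compl_iff, Set.mem_singleton_iff]
    linarith

/-- for `m ∈ ℕ`, `λ, σ > 0` and `T* > E_m(0)`, there is `C > 0` with
`∫₀ᵗ e^{-σ(t-τ)} L_m(T*+τ)^{-λ} dτ ≤ C L_m(T*+t)^{-λ}` for all `t ≥ 0`. -/
theorem stmt4 (m : ℕ) (lam σ Tstar : ℝ) (hlam : 0 < lam) (hσ : 0 < σ)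
    (hT : itExp m 0 < Tstar) :
    ∃ C : ℝ, 0 < C ∧ ∀ t ≥ (0:ℝ),
      (∫ τ in (0:ℝ)..t, Real.exp (-σ * (t - τ)) * itLog m (Tstar + τ) ^ (-lam)) ≤
        C * itLog m (Tstar + t) ^ (-lam) := by
  set b : ℝ := itLog m Tstar with hbdef
  have hb : 0 < b := itLog_pos hT
  set σ' : ℝ := σ / (2 * lam) with hσ'def
  have hσ' : 0 < σ' := by positivity
  set K₀ : ℝ := max 1 (1 / (σ' * b)) with hK₀def
  have hK₀ : 1 ≤ K₀ := le_max_left _ _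
  have hK₀pos : 0 < K₀ := lt_of_lt_of_le one_pos hK₀
  have hK₀b : 1 / b ≤ K₀ * σ' := by
    have h1 : 1 / (σ' * b) ≤ K₀ := le_max_right _ _
    rw [div_le_iff₀ hb]
    calc (1:ℝ) = (1 / (σ' * b)) * (σ' * b) := by field_simp
    _ ≤ K₀ * (σ' * b) := by
        apply mul_le_mul_of_nonneg_right h1 (by positivity)
    _ = K₀ * σ' * b := by ring
  -- linear bound : for v ≥ 0, 1 + v / b ≤ K₀ * exp (σ' * v)
  have hlin : ∀ v : ℝ, 0 ≤ v → 1 + v / b ≤ K₀ * Real.exp (σ' * v) := by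
    intro v hv
    have h1 : σ' * v + 1 ≤ Real.exp (σ' * v) := Real.add_one_le_exp _
    have h2 : 1 + v / b ≤ K₀ * (1 + σ' * v) := by
      have : v / b ≤ K₀ * σ' * v := by
        rw [div_le_iff₀ hb] at hK₀b ⊢
        · nlinarith
      nlinarith
    calc 1 + v / b ≤ K₀ * (1 + σ' * v) := h2
    _ ≤ K₀ * Real.exp (σ' * v) := by
        apply mul_le_mul_of_nonneg_left (by linarith) (le_of_lt hK₀pos)
  refine ⟨K₀ ^ lam * (2 / σ), by positivity, ?_⟩
  intro t ht
  set L : ℝ → ℝ := fun τ => itLog m (Tstar + τ) with hLdef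
  have hLpos : ∀ τ : ℝ, 0 ≤ τ → 0 < L τ := by
    intro τ hτ
    exact itLog_pos (by linarith)
  have hLt : 0 < L t := hLpos t ht
  -- pointwise bound
  have hpt : ∀ τ ∈ Set.Icc (0:ℝ) t,
      Real.exp (-σ * (t - τ)) * L τ ^ (-lam) ≤
        (K₀ ^ lam * L t ^ (-lam)) * Real.exp (-(σ/2) * (t - τ)) := by
    intro τ hτ
    obtain ⟨hτ0, hτt⟩ := hτ
    have hLτ : 0 < L τ := hLpos τ hτ0
    have hbLτ : b ≤ L τ := (lem2 m Tstar (Tstar + τ) hT (by linarith)).1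
    have hstep : L t ≤ L τ + (t - τ) := by
      have := (lem2 m (Tstar + τ) (Tstar + t) (by linarith) (by linarith)).2
      have e : (Tstar + t) - (Tstar + τ) = t - τ := by ring
      rw [e] at this
      exact this
    have hmul : L t ≤ L τ * (K₀ * Real.exp (σ' * (t - τ))) := by
      have h1 : L t ≤ L τ * (1 + (t - τ) / b) := by
        have h2 : (t - τ) ≤ L τ * ((t - τ) / b) := by
          rw [mul_div_assoc']
          rw [le_div_iff₀ hb]
          nlinarith
        nlinarith
      have h3 : 1 + (t - τ) / b ≤ K₀ * Real.exp (σ' * (t - τ)) := hlin _ (by linarith)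
      calc L t ≤ L τ * (1 + (t - τ) / b) := h1
      _ ≤ L τ * (K₀ * Real.exp (σ' * (t - τ))) := by
          apply mul_le_mul_of_nonneg_left h3 (le_of_lt hLτ)
    -- raise to power lam
    have hrpow : L t ^ lam ≤ L τ ^ lam * (K₀ ^ lam * Real.exp ((σ/2) * (t - τ))) := by
      have h1 : L t ^ lam ≤ (L τ * (K₀ * Real.exp (σ' * (t - τ)))) ^ lam :=
        Real.rpow_le_rpow (le_of_lt hLt) hmul (le_of_lt hlam)
      have h2 : (L τ * (K₀ * Real.exp (σ' * (t - τ)))) ^ lam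
          = L τ ^ lam * (K₀ ^ lam * (Real.exp (σ' * (t - τ))) ^ lam) := by
        rw [Real.mul_rpow (le_of_lt hLτ) (by positivity),
            Real.mul_rpow (le_of_lt hK₀pos) (by positivity)]
      have h3 : (Real.exp (σ' * (t - τ))) ^ lam = Real.exp ((σ/2) * (t - τ)) := by
        rw [← Real.exp_mul]
        congr 1
        field_simp [hσ'def]
        have hσl : σ' * lam * 2 = σ := by
          rw [hσ'def, div_mul_eq_mul_div, div_mul_eq_mul_div, div_eq_iff (by positivity)]; ring
        linear_combination (t - τ) * hσl
      rw [h2, h3] at h1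
      exact h1
    -- convert to the inverse inequality
    rw [Real.rpow_neg (le_of_lt hLτ), Real.rpow_neg (le_of_lt hLt)]
    have hLτp : 0 < L τ ^ lam := Real.rpow_pos_of_pos hLτ lam
    have hLtp : 0 < L t ^ lam := Real.rpow_pos_of_pos hLt lam
    have e1 : Real.exp (-σ*(t-τ)) * (L τ ^ lam)⁻¹ = Real.exp (-σ*(t-τ)) / L τ ^ lam := by
      rw [div_eq_mul_inv]
    have e2 : K₀ ^ lam * (L t ^ lam)⁻¹ * Real.exp (-(σ/2)*(t-τ))
        = (K₀ ^ lam * Real.exp (-(σ/2)*(t-τ))) / L t ^ lam := by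
      rw [div_eq_mul_inv]; ring
    rw [e1, e2, div_le_div_iff₀ hLτp hLtp]
    have hexp : Real.exp (-σ*(t-τ)) * Real.exp ((σ/2)*(t-τ)) = Real.exp (-(σ/2)*(t-τ)) := by
      rw [← Real.exp_add]; ring_nf
    calc Real.exp (-σ*(t-τ)) * L t ^ lam
        ≤ Real.exp (-σ*(t-τ)) * (L τ ^ lam * (K₀ ^ lam * Real.exp ((σ/2) * (t - τ)))) :=
          mul_le_mul_of_nonneg_left hrpow (Real.exp_nonneg _)
      _ = (Real.exp (-σ*(t-τ)) * Real.exp ((σ/2)*(t-τ))) * K₀ ^ lam * L τ ^ lam := by ring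
      _ = Real.exp (-(σ/2)*(t-τ)) * K₀ ^ lam * L τ ^ lam := by rw [hexp]
      _ = K₀ ^ lam * Real.exp (-(σ/2)*(t-τ)) * L τ ^ lam := by ring
  -- integrability of the LHS
  have hmaps : ∀ τ ∈ Set.uIcc (0:ℝ) t, Tstar + τ ∈ Set.Ioi (itExp m 0) := by
    intro τ hτ
    rw [Set.uIcc_of_le ht] at hτ
    have : (0:ℝ) ≤ τ := hτ.1
    simp only [Set.mem_Ioi]
    linarith
  have hLcont : ContinuousOn L (Set.uIcc (0:ℝ) t) := by
    apply (itLog_continuousOn m).comp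
      ((continuous_const.add continuous_id).continuousOn) hmaps
  have hcont1 : ContinuousOn (fun τ => Real.exp (-σ * (t - τ)) * L τ ^ (-lam))
      (Set.uIcc (0:ℝ) t) := by
    apply ContinuousOn.mul
    · exact (Real.continuous_exp.comp (continuous_const.mul (continuous_const.sub continuous_id))).continuousOn
    · apply hLcont.rpow_const
      intro τ hτ
      left
      rw [Set.uIcc_of_le ht] at hτ
      exact ne_of_gt (hLpos τ hτ.1)
  have hint1 : IntervalIntegrable (fun τ => Real.exp (-σ * (t - τ)) * L τ ^ (-lam))
      MeasureTheory.volume 0 t := hcont1.intervalIntegrable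
  have hcont2 : Continuous (fun τ : ℝ => (K₀ ^ lam * L t ^ (-lam)) * Real.exp (-(σ/2) * (t - τ))) := by
    exact continuous_const.mul (Real.continuous_exp.comp (continuous_const.mul (continuous_const.sub continuous_id)))
  have hint2 : IntervalIntegrable
      (fun τ : ℝ => (K₀ ^ lam * L t ^ (-lam)) * Real.exp (-(σ/2) * (t - τ)))
      MeasureTheory.volume 0 t := hcont2.intervalIntegrable 0 t
  have hstep1 : (∫ τ in (0:ℝ)..t, Real.exp (-σ * (t - τ)) * L τ ^ (-lam)) ≤
      ∫ τ in (0:ℝ)..t, (K₀ ^ lam * L t ^ (-lam)) * Real.exp (-(σ/2) * (t - τ)) :=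
    intervalIntegral.integral_mono_on ht hint1 hint2 hpt
  -- compute the exponential integral
  have hderiv : ∀ τ ∈ Set.uIcc (0:ℝ) t,
      HasDerivAt (fun τ : ℝ => (2/σ) * Real.exp (-(σ/2) * (t - τ)))
        (Real.exp (-(σ/2) * (t - τ))) τ := by
    intro τ _
    have h1 : HasDerivAt (fun τ : ℝ => -(σ/2) * (t - τ)) (σ/2) τ := by
      have : HasDerivAt (fun τ : ℝ => t - τ) (-1) τ := by
        simpa using (hasDerivAt_id τ).const_sub t
      have h2 := this.const_mul (-(σ/2))
      simpa using h2.congr_deriv (by ring)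
    have h3 := h1.exp
    have h4 := h3.const_mul (2/σ)
    have e : (2/σ) * (Real.exp (-(σ/2) * (t - τ)) * (σ/2)) = Real.exp (-(σ/2) * (t - τ)) := by
      field_simp
    rwa [e] at h4
  have hintexp : IntervalIntegrable (fun τ : ℝ => Real.exp (-(σ/2) * (t - τ)))
      MeasureTheory.volume 0 t :=
    ((Real.continuous_exp.comp (continuous_const.mul (continuous_const.sub continuous_id))).intervalIntegrable 0 t)
  have hcalc : (∫ τ in (0:ℝ)..t, Real.exp (-(σ/2) * (t - τ)))
      = (2/σ) * Real.exp (-(σ/2) * (t - t)) - (2/σ) * Real.exp (-(σ/2) * (t - 0)) :=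
    intervalIntegral.integral_eq_sub_of_hasDerivAt hderiv hintexp
  have hbound : (∫ τ in (0:ℝ)..t, Real.exp (-(σ/2) * (t - τ))) ≤ 2/σ := by
    rw [hcalc]
    have h1 : Real.exp (-(σ/2) * (t - t)) = 1 := by simp
    have h2 : 0 < Real.exp (-(σ/2) * (t - 0)) := Real.exp_pos _
    rw [h1]
    have : 0 < 2/σ := by positivity
    nlinarith
  have hstep2 : (∫ τ in (0:ℝ)..t, (K₀ ^ lam * L t ^ (-lam)) * Real.exp (-(σ/2) * (t - τ)))
      = (K₀ ^ lam * L t ^ (-lam)) * ∫ τ in (0:ℝ)..t, Real.exp (-(σ/2) * (t - τ)) :=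
    intervalIntegral.integral_const_mul _ _
  have hnn : 0 ≤ K₀ ^ lam * L t ^ (-lam) := by
    have := Real.rpow_pos_of_pos hK₀pos lam
    have := Real.rpow_pos_of_pos hLt (-lam)
    positivity
  calc (∫ τ in (0:ℝ)..t, Real.exp (-σ * (t - τ)) * itLog m (Tstar + τ) ^ (-lam))
      ≤ ∫ τ in (0:ℝ)..t, (K₀ ^ lam * L t ^ (-lam)) * Real.exp (-(σ/2) * (t - τ)) := hstep1
    _ = (K₀ ^ lam * L t ^ (-lam)) * ∫ τ in (0:ℝ)..t, Real.exp (-(σ/2) * (t - τ)) := hstep2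
    _ ≤ (K₀ ^ lam * L t ^ (-lam)) * (2/σ) := mul_le_mul_of_nonneg_left hbound hnn
    _ = K₀ ^ lam * (2/σ) * itLog m (Tstar + t) ^ (-lam) := by ring
end

section
/- Let A be a diagonalizable n×n real matrix with positive distinct eigenvalues λ_1 < … < λ_d, let p : ℝ → ℝⁿ be a polynomial, g : [T,∞) → ℝⁿ continuous with |g(t)| = O(e^{-αt}) for some α > 0, and λ > 0. Suppose y ∈ C([T,∞), ℝⁿ) solves y' = −(A − λI)y + p(t) + g(t), and if λ > λ_1 assume e^{(λ* − λ)t}|y(t)| → 0 where λ* = max{λ_j : λ_j < λ}. Then there exists a unique ℝⁿ-valued polynomial q with q' = −(A − λI)q + p on ℝ, and |y(t) − q(t)| = O(e^{-εt}) for all ε ∈ (0, δ), where δ = min_j ε_{α, λ_j − λ} > 0 with ε_{δ',β} = min{δ',β} if β > 0 and ε_{δ',β} = δ' otherwise. -/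
/-- An `X`-valued polynomial function of one real variable. -/
def IsPolyFun {X : Type*} [AddCommGroup X] [Module ℝ X] (q : ℝ → X) : Prop :=
  ∃ (N : ℕ) (a : ℕ → X), ∀ t : ℝ, q t = ∑ k ∈ Finset.range (N + 1), t ^ k • a k

/-- `ε_{δ,β} = min{δ,β}` if `β > 0`, and `δ` otherwise. -/
noncomputable def epsdb (δ β : ℝ) : ℝ := if 0 < β then min δ β else δ

open Polynomial Set MeasureTheory Filter Real intervalIntegral

noncomputable def polySol (μ : ℝ) (P : ℝ[X]) : ℝ[X] :=
  -μ⁻¹ • ∑ k ∈ Finset.range (P.natDegree + 1), (μ⁻¹) ^ k • (Polynomial.derivative^[k] P)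

lemma polySol_spec {μ : ℝ} (hμ : μ ≠ 0) (P : ℝ[X]) :
    Polynomial.derivative (polySol μ P) = μ • polySol μ P + P := by
  set N := P.natDegree with hN
  have hzero : Polynomial.derivative^[N + 1] P = 0 :=
    Polynomial.iterate_derivative_eq_zero (Nat.lt_succ_self _)
  have h1 : Polynomial.derivative (polySol μ P)
      = -∑ k ∈ Finset.range N, (μ⁻¹) ^ (k+1) • (Polynomial.derivative^[k+1] P) := by
    unfold polySol
    rw [LinearMap.map_smul, map_sum]
    have : ∀ k ∈ Finset.range (N+1), Polynomial.derivative ((μ⁻¹) ^ k • (Polynomial.derivative^[k] P))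
        = (μ⁻¹) ^ k • (Polynomial.derivative^[k+1] P) := by
      intro k _
      rw [LinearMap.map_smul, Function.iterate_succ_apply']
    rw [Finset.sum_congr rfl this, Finset.sum_range_succ, hzero, smul_zero, add_zero,
      neg_smul, Finset.smul_sum, neg_inj]
    exact Finset.sum_congr rfl fun k _ => by rw [smul_smul, ← pow_succ']
  have h2 : μ • polySol μ P
      = -(P + ∑ k ∈ Finset.range N, (μ⁻¹) ^ (k+1) • (Polynomial.derivative^[k+1] P)) := by
    unfold polySol
    rw [smul_smul, mul_neg, mul_inv_cancel₀ hμ, neg_smul, one_smul, Finset.sum_range_succ']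
    simp only [Function.iterate_zero_apply, pow_zero, one_smul, ← hN]
    rw [add_comm]
  rw [h1, h2, neg_add]
  abel

noncomputable def antider (P : ℝ[X]) : ℝ[X] :=
  ∑ k ∈ Finset.range (P.natDegree + 1), Polynomial.C (P.coeff k / (k+1)) * Polynomial.X ^ (k+1)

lemma antider_spec (P : ℝ[X]) : Polynomial.derivative (antider P) = P := by
  unfold antider
  rw [map_sum]
  have : ∀ k ∈ Finset.range (P.natDegree + 1),
      Polynomial.derivative (Polynomial.C (P.coeff k / (k+1)) * Polynomial.X ^ (k+1))
      = Polynomial.monomial k (P.coeff k) := by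
    intro k _
    rw [Polynomial.derivative_C_mul_X_pow, ← Polynomial.C_mul_X_pow_eq_monomial]
    congr 2
    push_cast
    field_simp
  rw [Finset.sum_congr rfl this]
  exact (Polynomial.as_sum_range' P _ (Nat.lt_succ_self _)).symm

lemma polyfun_vanish {m : ℕ} {b : ℕ → ℝ}
    (h : Filter.Tendsto (fun t => ∑ k ∈ Finset.range m, t ^ k * b k) atTop (nhds 0)) :
    ∀ t : ℝ, ∑ k ∈ Finset.range m, t ^ k * b k = 0 := by
  set P : ℝ[X] := ∑ k ∈ Finset.range m, Polynomial.C (b k) * Polynomial.X ^ k with hP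
  have hev : ∀ t : ℝ, P.eval t = ∑ k ∈ Finset.range m, t ^ k * b k := by
    intro t
    rw [hP, Polynomial.eval_finset_sum]
    exact Finset.sum_congr rfl fun k _ => by
      rw [Polynomial.eval_mul, Polynomial.eval_C, Polynomial.eval_pow, Polynomial.eval_X]; ring
  have h0 : Filter.Tendsto (fun t => P.eval t) atTop (nhds 0) := by
    simpa only [hev] using h
  have hP0 : ∀ t : ℝ, P.eval t = 0 := by
    rcases le_or_gt P.degree 0 with hdeg | hdeg
    · have hC := Polynomial.eq_C_of_degree_le_zero hdeg
      have : P.coeff 0 = 0 := by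
        have := h0.congr (fun t => by rw [hC, Polynomial.eval_C])
        exact tendsto_nhds_unique tendsto_const_nhds this
      intro t; rw [hC, this, Polynomial.eval_C]
    · exfalso
      exact not_tendsto_atTop_of_tendsto_nhds h0.abs (Polynomial.abs_tendsto_atTop P hdeg)
  intro t; rw [← hev, hP0]

lemma integral_exp_mul' {c : ℝ} (hc : c ≠ 0) (a b : ℝ) :
    ∫ s in a..b, Real.exp (c * s) = (Real.exp (c * b) - Real.exp (c * a)) / c := by
  have hd : ∀ x ∈ Set.uIcc a b, HasDerivAt (fun s => Real.exp (c * s) / c) (Real.exp (c * x)) x := by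
    intro x _
    have h1 : HasDerivAt (fun s : ℝ => c * s) c x := by
      simpa using (hasDerivAt_id x).const_mul c
    have := (Real.hasDerivAt_exp (c * x)).comp x h1
    have h2 := this.div_const c
    simpa [mul_div_assoc, mul_div_cancel_right₀ _ hc] using h2
  rw [intervalIntegral.integral_eq_sub_of_hasDerivAt hd
    ((Real.continuous_exp.comp (continuous_const.mul continuous_id)).intervalIntegrable a b)]
  ring

set_option maxHeartbeats 1000000 in
lemma integral_exp_neg_mul_Ioi' {c : ℝ} (hc : 0 < c) (a : ℝ) :
    ∫ s in Set.Ioi a, Real.exp (-(c * s)) = Real.exp (-(c * a)) / c := by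
  have hd : ∀ x ∈ Set.Ioi a, HasDerivAt (fun s => -Real.exp (-(c * s)) / c) (Real.exp (-(c * x))) x := by
    intro x _
    have h1 : HasDerivAt (fun s : ℝ => -(c * s)) (-c) x := by
      have := ((hasDerivAt_id x).const_mul c).neg; simp only [id, mul_one] at this; exact this
    have h2 := ((Real.hasDerivAt_exp (-(c * x))).comp x h1).neg.div_const c
    have hne : c ≠ 0 := ne_of_gt hc
    refine h2.congr_deriv ?_
    rw [div_eq_iff hne]; ring
  have hint : MeasureTheory.IntegrableOn (fun s => Real.exp (-(c * s))) (Set.Ioi a) := by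
    simpa using exp_neg_integrableOn_Ioi a hc
  have htend : Filter.Tendsto (fun s => -Real.exp (-(c * s)) / c) atTop (nhds 0) := by
    have h1 : Filter.Tendsto (fun s : ℝ => -(c * s)) atTop atBot := by
      simpa using (Filter.tendsto_id (α := ℝ)).const_mul_atTop_of_neg (neg_neg_iff_pos.mpr hc)
    have h2 : Filter.Tendsto (fun s : ℝ => Real.exp (-(c * s))) atTop (nhds 0) :=
      Real.tendsto_exp_atBot.comp h1
    simpa [neg_div] using (h2.div_const c).neg
  have hcont : Continuous (fun s : ℝ => -Real.exp (-(c * s)) / c) :=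
    ((Real.continuous_exp.comp ((continuous_const.mul continuous_id).neg)).neg).div_const c
  have := MeasureTheory.integral_Ioi_of_hasDerivAt_of_tendsto
    (f := fun s => -Real.exp (-(c * s)) / c) (f' := fun s => Real.exp (-(c * s)))
    hcont.continuousWithinAt (hd) hint htend
  rw [this]
  ring

/-- integrability of an exponentially dominated continuous function on `Ioi a` -/
lemma integrableOn_of_expbound {G : ℝ → ℝ} {a C β : ℝ} (hβ : 0 < β)
    (hGc : ContinuousOn G (Set.Ici a)) (hB : ∀ t ≥ a, |G t| ≤ C * Real.exp (-(β * t))) :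
    MeasureTheory.IntegrableOn G (Set.Ioi a) := by
  have hmeas : MeasureTheory.AEStronglyMeasurable G (MeasureTheory.volume.restrict (Set.Ioi a)) :=
    (hGc.mono Set.Ioi_subset_Ici_self).aestronglyMeasurable measurableSet_Ioi
  have hint : MeasureTheory.IntegrableOn (fun t => C * Real.exp (-(β * t))) (Set.Ioi a) := by
    have := (exp_neg_integrableOn_Ioi a hβ).const_mul C
    simp only [neg_mul] at this; exact this
  refine hint.integrable.mono' hmeas ?_
  filter_upwards [MeasureTheory.ae_restrict_mem measurableSet_Ioi] with t ht
  exact (abs_le.mp (hB t (le_of_lt ht))).2 |> fun h2 => by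
    rw [Real.norm_eq_abs]; exact hB t (le_of_lt ht)

/-- tail bound -/
lemma tail_bound {G : ℝ → ℝ} {t C β : ℝ} (hβ : 0 < β) (hC : 0 ≤ C)
    (hint : MeasureTheory.IntegrableOn G (Set.Ioi t))
    (hB : ∀ s ≥ t, |G s| ≤ C * Real.exp (-(β * s))) :
    |∫ s in Set.Ioi t, G s| ≤ C * Real.exp (-(β * t)) / β := by
  have h1 : ∀ᵐ s ∂(MeasureTheory.volume.restrict (Set.Ioi t)), ‖G s‖ ≤ C * Real.exp (-(β * s)) := by
    filter_upwards [MeasureTheory.ae_restrict_mem measurableSet_Ioi] with s hs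
    rw [Real.norm_eq_abs]; exact hB s (le_of_lt hs)
  have h2 : MeasureTheory.Integrable (fun s => C * Real.exp (-(β * s)))
      (MeasureTheory.volume.restrict (Set.Ioi t)) := by
    have := (exp_neg_integrableOn_Ioi t hβ).const_mul C
    simpa [neg_mul] using this
  calc |∫ s in Set.Ioi t, G s| ≤ ∫ s in Set.Ioi t, C * Real.exp (-(β * s)) := by
        rw [← Real.norm_eq_abs]
        exact MeasureTheory.norm_integral_le_of_norm_le h2 h1
    _ = C * Real.exp (-(β * t)) / β := by
        rw [MeasureTheory.integral_const_mul, integral_exp_neg_mul_Ioi' hβ]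
        ring

/-- splitting the improper integral -/
lemma integral_Ioi_split {G : ℝ → ℝ} {a t : ℝ} (hat : a ≤ t)
    (hint : MeasureTheory.IntegrableOn G (Set.Ioi a)) :
    ∫ s in Set.Ioi a, G s = (∫ s in a..t, G s) + ∫ s in Set.Ioi t, G s := by
  rw [intervalIntegral.integral_of_le hat]
  have hu : Set.Ioc a t ∪ Set.Ioi t = Set.Ioi a := Set.Ioc_union_Ioi_eq_Ioi hat
  rw [← hu, MeasureTheory.setIntegral_union Set.Ioc_disjoint_Ioi_same measurableSet_Ioi
    (hint.mono (by rw [← hu]; exact Set.subset_union_left) le_rfl)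
    (hint.mono (by rw [← hu]; exact Set.subset_union_right) le_rfl)]

/-- FTC representation for `w' = μ w + G` on `[a, b] ⊆ [T, ∞)` -/
lemma ode_rep {μ T : ℝ} {w G : ℝ → ℝ} (hw : ContinuousOn w (Set.Ici T))
    (hG : ContinuousOn G (Set.Ici T))
    (hode : ∀ t > T, HasDerivAt w (μ * w t + G t) t)
    {a b : ℝ} (hTa : T ≤ a) (hab : a ≤ b) :
    Real.exp (-(μ * b)) * w b - Real.exp (-(μ * a)) * w a
      = ∫ s in a..b, Real.exp (-(μ * s)) * G s := by
  set f : ℝ → ℝ := fun s => Real.exp (-(μ * s)) * w s with hf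
  have hcont : ContinuousOn f (Set.Icc a b) := by
    apply ContinuousOn.mul
    · exact (Real.continuous_exp.comp ((continuous_const.mul continuous_id).neg)).continuousOn
    · exact hw.mono (fun x hx => le_trans hTa hx.1)
  have hderiv : ∀ x ∈ Set.Ioo a b, HasDerivWithinAt f (Real.exp (-(μ * x)) * G x) (Set.Ioi x) x := by
    intro x hx
    have hxT : x > T := lt_of_le_of_lt hTa hx.1
    have h1 : HasDerivAt (fun s : ℝ => Real.exp (-(μ * s))) (-μ * Real.exp (-(μ * x))) x := by
      have hi : HasDerivAt (fun s : ℝ => -(μ * s)) (-μ) x := by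
        have := ((hasDerivAt_id x).const_mul μ).neg; simp only [id, mul_one] at this; exact this
      exact ((Real.hasDerivAt_exp (-(μ * x))).comp x hi).congr_deriv (g' := -μ * Real.exp (-(μ * x))) (by ring)
    have h2 := h1.mul (hode x hxT)
    have : HasDerivAt f (Real.exp (-(μ * x)) * G x) x := by
      refine h2.congr_deriv ?_
      ring
    exact this.hasDerivWithinAt
  have hii : IntervalIntegrable (fun s => Real.exp (-(μ * s)) * G s) MeasureTheory.volume a b := by
    apply ContinuousOn.intervalIntegrable
    apply ContinuousOn.mul
    · exact (Real.continuous_exp.comp ((continuous_const.mul continuous_id).neg)).continuousOn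
    · exact hG.mono (fun x hx => by
        rcases Set.mem_uIcc.mp hx with h | h
        · exact le_trans hTa h.1
        · exact le_trans (le_trans hTa hab) h.1)
  have := intervalIntegral.integral_eq_sub_of_hasDeriv_right_of_le hab hcont hderiv hii
  rw [this]

/-- polynomial times decaying exponential tends to zero -/
lemma poly_mul_exp_tendsto {μ : ℝ} (hμ : 0 < μ) (Q : ℝ[X]) :
    Filter.Tendsto (fun t => Real.exp (-(μ * t)) * Q.eval t) atTop (nhds 0) := by
  have key : ∀ k : ℕ, Filter.Tendsto (fun t : ℝ => Real.exp (-(μ * t)) * t ^ k) atTop (nhds 0) := by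
    intro k
    have h1 : Filter.Tendsto (fun t : ℝ => μ * t) atTop atTop :=
      Filter.Tendsto.const_mul_atTop hμ Filter.tendsto_id
    have h2 := (tendsto_pow_mul_exp_neg_atTop_nhds_zero k).comp h1
    have h3 := h2.const_mul ((μ ^ k)⁻¹)
    rw [mul_zero] at h3
    apply h3.congr'
    filter_upwards [Filter.eventually_gt_atTop 0] with t _
    simp only [Function.comp_apply]
    field_simp
    ring
  have hev : ∀ t : ℝ, Real.exp (-(μ * t)) * Q.eval t
      = ∑ k ∈ Finset.range (Q.natDegree + 1), Q.coeff k * (Real.exp (-(μ * t)) * t ^ k) := by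
    intro t
    rw [Polynomial.eval_eq_sum_range' (Nat.lt_succ_self _), Finset.mul_sum]
    exact Finset.sum_congr rfl fun k _ => by ring
  simp only [hev]
  have : Filter.Tendsto (fun t : ℝ => ∑ k ∈ Finset.range (Q.natDegree + 1),
      Q.coeff k * (Real.exp (-(μ * t)) * t ^ k)) atTop
      (nhds (∑ k ∈ Finset.range (Q.natDegree + 1), Q.coeff k * 0)) := by
    apply tendsto_finset_sum
    intro k _
    exact (key k).const_mul _
  simpa using this

lemma scalar_main {μ α T C : ℝ} (hα : 0 < α) (hC : 0 < C) (P : ℝ[X]) {z G : ℝ → ℝ}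
    (hz : ContinuousOn z (Set.Ici T)) (hG : ContinuousOn G (Set.Ici T))
    (hode : ∀ t > T, HasDerivAt z (μ * z t + P.eval t + G t) t)
    (hB : ∀ t ≥ T, |G t| ≤ C * Real.exp (-(α * t)))
    (hgrow : 0 < μ → Filter.Tendsto (fun t => Real.exp (-(μ * t)) * z t) atTop (nhds 0)) :
    ∃ Q : ℝ[X], Polynomial.derivative Q = μ • Q + P ∧
      ∀ ε ∈ Set.Ioo 0 (epsdb α (-μ)), ∃ C' T'' : ℝ, 0 < C' ∧
        ∀ t ≥ T'', |z t - Q.eval t| ≤ C' * Real.exp (-(ε * t)) := by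
  rcases lt_trichotomy μ 0 with hμ | hμ | hμ
  -- decaying mode: μ < 0
  · refine ⟨polySol μ P, polySol_spec (ne_of_lt hμ) P, ?_⟩
    intro ε hε
    have hεα : ε < α := lt_of_lt_of_le hε.2 (by
      unfold epsdb; rw [if_pos (by linarith : (0:ℝ) < -μ)]; exact min_le_left _ _)
    have hεμ : ε < -μ := lt_of_lt_of_le hε.2 (by
      unfold epsdb; rw [if_pos (by linarith : (0:ℝ) < -μ)]; exact min_le_right _ _)
    have hε0 : 0 < ε := hε.1
    set Q := polySol μ P with hQ
    set w : ℝ → ℝ := fun t => z t - Q.eval t with hw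
    have hwc : ContinuousOn w (Set.Ici T) := hz.sub (Polynomial.continuous_aeval Q).continuousOn
    have hwode : ∀ t > T, HasDerivAt w (μ * w t + G t) t := by
      intro t ht
      have h1 := (hode t ht).sub (Q.hasDerivAt t)
      have h2 : (Polynomial.derivative Q).eval t = μ * Q.eval t + P.eval t := by
        rw [polySol_spec (ne_of_lt hμ) P]; simp [hQ]
      refine h1.congr_deriv ?_
      rw [h2, hw]; ring
    set K : ℝ := C * Real.exp ((ε - α) * T) / (-μ - ε) with hK
    have hKpos : 0 < K := by
      rw [hK]; apply div_pos (by positivity); linarith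
    refine ⟨|w T| * Real.exp (-(μ * T)) * Real.exp ((μ + ε) * T) + K, T, ?_, ?_⟩
    · have h1 : 0 ≤ |w T| * Real.exp (-(μ * T)) * Real.exp ((μ + ε) * T) := by positivity
      linarith
    intro t ht
    have hkey := ode_rep hwc hG hwode (le_refl T) ht
    -- bound the integral
    have hptw : ∀ s ∈ Set.Icc T t, |Real.exp (-(μ * s)) * G s|
        ≤ C * Real.exp ((ε - α) * T) * Real.exp ((-μ - ε) * s) := by
      intro s hs
      rw [abs_mul, abs_of_pos (Real.exp_pos _)]
      calc Real.exp (-(μ * s)) * |G s| ≤ Real.exp (-(μ * s)) * (C * Real.exp (-(α * s))) := by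
            apply mul_le_mul_of_nonneg_left (hB s hs.1) (le_of_lt (Real.exp_pos _))
        _ = C * (Real.exp ((ε - α) * s) * Real.exp ((-μ - ε) * s)) := by
            rw [← Real.exp_add]
            have he : (ε - α) * s + (-μ - ε) * s = -(μ * s) + -(α * s) := by ring
            rw [he, Real.exp_add]; ring
        _ ≤ C * (Real.exp ((ε - α) * T) * Real.exp ((-μ - ε) * s)) := by
            apply mul_le_mul_of_nonneg_left _ (le_of_lt hC)
            apply mul_le_mul_of_nonneg_right _ (le_of_lt (Real.exp_pos _))
            exact Real.exp_le_exp.mpr (by nlinarith [hs.1])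
        _ = C * Real.exp ((ε - α) * T) * Real.exp ((-μ - ε) * s) := by ring
    have hIb : |∫ s in T..t, Real.exp (-(μ * s)) * G s| ≤ K * Real.exp ((-μ - ε) * t) := by
      have hfc : ContinuousOn (fun s => Real.exp (-(μ * s)) * G s) (Set.Icc T t) := by
        apply ContinuousOn.mul
        · exact (Real.continuous_exp.comp ((continuous_const.mul continuous_id).neg)).continuousOn
        · exact hG.mono (fun x hx => hx.1)
      have h1 : |∫ s in T..t, Real.exp (-(μ * s)) * G s|
          ≤ ∫ s in T..t, |Real.exp (-(μ * s)) * G s| := by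
        rw [← Real.norm_eq_abs (∫ s in T..t, _)]
        exact intervalIntegral.norm_integral_le_integral_norm ht
      have h2 : ∫ s in T..t, |Real.exp (-(μ * s)) * G s|
          ≤ ∫ s in T..t, C * Real.exp ((ε - α) * T) * Real.exp ((-μ - ε) * s) := by
        apply intervalIntegral.integral_mono_on ht
        · apply ContinuousOn.intervalIntegrable
          rw [Set.uIcc_of_le ht]
          exact hfc.abs
        · apply ContinuousOn.intervalIntegrable
          exact (continuous_const.mul
            (Real.continuous_exp.comp (continuous_const.mul continuous_id))).continuousOn
        · exact hptw
      have h3 : ∫ s in T..t, C * Real.exp ((ε - α) * T) * Real.exp ((-μ - ε) * s)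
          = C * Real.exp ((ε - α) * T)
            * ((Real.exp ((-μ - ε) * t) - Real.exp ((-μ - ε) * T)) / (-μ - ε)) := by
        rw [intervalIntegral.integral_const_mul, integral_exp_mul' (by linarith : -μ - ε ≠ 0)]
      have h4 : C * Real.exp ((ε - α) * T)
            * ((Real.exp ((-μ - ε) * t) - Real.exp ((-μ - ε) * T)) / (-μ - ε))
          ≤ K * Real.exp ((-μ - ε) * t) := by
        rw [hK, div_mul_eq_mul_div, mul_div_assoc]
        apply mul_le_mul_of_nonneg_left _ (by positivity)
        rw [div_le_div_iff₀ (by linarith) (by linarith)]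
        nlinarith [Real.exp_pos ((-μ - ε) * T)]
      linarith
    -- assemble
    have habs : Real.exp (-(μ * t)) * |w t|
        ≤ Real.exp (-(μ * T)) * |w T| + K * Real.exp ((-μ - ε) * t) := by
      have h0 : Real.exp (-(μ * t)) * w t
          = Real.exp (-(μ * T)) * w T + ∫ s in T..t, Real.exp (-(μ * s)) * G s := by
        linarith [hkey]
      calc Real.exp (-(μ * t)) * |w t| = |Real.exp (-(μ * t)) * w t| := by
            rw [abs_mul, abs_of_pos (Real.exp_pos _)]
        _ ≤ |Real.exp (-(μ * T)) * w T| + |∫ s in T..t, Real.exp (-(μ * s)) * G s| := by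
            rw [h0]; exact abs_add_le _ _
        _ ≤ Real.exp (-(μ * T)) * |w T| + K * Real.exp ((-μ - ε) * t) := by
            rw [abs_mul, abs_of_pos (Real.exp_pos _)]; linarith
    have hfin := mul_le_mul_of_nonneg_left habs (le_of_lt (Real.exp_pos (μ * t)))
    have hL : Real.exp (μ * t) * (Real.exp (-(μ * t)) * |w t|) = |w t| := by
      rw [← mul_assoc, ← Real.exp_add]; simp
    rw [hL, mul_add] at hfin
    have hR1 : Real.exp (μ * t) * (Real.exp (-(μ * T)) * |w T|)
        ≤ |w T| * Real.exp (-(μ * T)) * Real.exp ((μ + ε) * T) * Real.exp (-(ε * t)) := by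
      have he : Real.exp (μ * t) ≤ Real.exp ((μ + ε) * T) * Real.exp (-(ε * t)) := by
        rw [← Real.exp_add]
        apply Real.exp_le_exp.mpr
        nlinarith
      calc Real.exp (μ * t) * (Real.exp (-(μ * T)) * |w T|)
          ≤ (Real.exp ((μ + ε) * T) * Real.exp (-(ε * t))) * (Real.exp (-(μ * T)) * |w T|) := by
            apply mul_le_mul_of_nonneg_right he (by positivity)
        _ = |w T| * Real.exp (-(μ * T)) * Real.exp ((μ + ε) * T) * Real.exp (-(ε * t)) := by ring
    have hR2 : Real.exp (μ * t) * (K * Real.exp ((-μ - ε) * t)) = K * Real.exp (-(ε * t)) := by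
      rw [mul_comm, mul_assoc, ← Real.exp_add]
      congr 2
      ring
    rw [hR2] at hfin
    calc |z t - Q.eval t| = |w t| := rfl
      _ ≤ Real.exp (μ * t) * (Real.exp (-(μ * T)) * |w T|) + K * Real.exp (-(ε * t)) := hfin
      _ ≤ |w T| * Real.exp (-(μ * T)) * Real.exp ((μ + ε) * T) * Real.exp (-(ε * t))
            + K * Real.exp (-(ε * t)) := by linarith
      _ = (|w T| * Real.exp (-(μ * T)) * Real.exp ((μ + ε) * T) + K) * Real.exp (-(ε * t)) := by
            ring
  -- μ = 0
  · subst hμ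
    have hint : MeasureTheory.IntegrableOn G (Set.Ioi T) := integrableOn_of_expbound hα hG hB
    set Iinf : ℝ := ∫ s in Set.Ioi T, G s with hI
    set Q : ℝ[X] := antider P + Polynomial.C (z T + Iinf - (antider P).eval T) with hQ
    have hQd : Polynomial.derivative Q = (0:ℝ) • Q + P := by
      rw [hQ, map_add, antider_spec, Polynomial.derivative_C, zero_smul, zero_add, add_zero]
    refine ⟨Q, hQd, ?_⟩
    intro ε hε
    have hεα : ε < α := lt_of_lt_of_le hε.2 (by unfold epsdb; norm_num)
    set w : ℝ → ℝ := fun t => z t - Q.eval t with hw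
    have hwT : w T = -Iinf := by
      simp only [hw, hQ, Polynomial.eval_add, Polynomial.eval_C]
      ring
    have hwc : ContinuousOn w (Set.Ici T) := hz.sub (Polynomial.continuous_aeval Q).continuousOn
    have hwode : ∀ t > T, HasDerivAt w ((0:ℝ) * w t + G t) t := by
      intro t ht
      have h1 := (hode t ht).sub (Q.hasDerivAt t)
      have h2 : (Polynomial.derivative Q).eval t = P.eval t := by
        rw [hQd]; simp
      refine h1.congr_deriv ?_
      rw [h2, hw]; ring
    refine ⟨C / α + 1, max T 0, by positivity, ?_⟩
    intro t ht
    have htT : T ≤ t := le_trans (le_max_left _ _) ht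
    have ht0 : 0 ≤ t := le_trans (le_max_right _ _) ht
    have hkey := ode_rep hwc hG hwode (le_refl T) htT
    simp only [zero_mul, neg_zero, Real.exp_zero, one_mul] at hkey
    have hsplit := integral_Ioi_split htT hint
    have hwt : w t = -∫ s in Set.Ioi t, G s := by
      rw [← hI] at hsplit
      have : w t = w T + ∫ s in T..t, G s := by linarith [hkey]
      rw [this, hwT]
      linarith [hsplit]
    have htail : |∫ s in Set.Ioi t, G s| ≤ C * Real.exp (-(α * t)) / α := by
      apply tail_bound hα (le_of_lt hC) (hint.mono (Set.Ioi_subset_Ioi htT) le_rfl)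
      exact fun s hs => hB s (le_trans htT hs)
    have hfin : |w t| ≤ C * Real.exp (-(α * t)) / α := by rw [hwt, abs_neg]; exact htail
    have hee : Real.exp (-(α * t)) ≤ Real.exp (-(ε * t)) :=
      Real.exp_le_exp.mpr (by nlinarith)
    calc |z t - Q.eval t| = |w t| := rfl
      _ ≤ C * Real.exp (-(α * t)) / α := hfin
      _ ≤ C * Real.exp (-(ε * t)) / α := by
          gcongr <;> nlinarith [hεα, ht0, hε.1]
      _ = (C / α) * Real.exp (-(ε * t)) := by ring
      _ ≤ (C / α + 1) * Real.exp (-(ε * t)) := by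
          have := Real.exp_pos (-(ε * t)); nlinarith
  -- μ > 0
  · refine ⟨polySol μ P, polySol_spec (ne_of_gt hμ) P, ?_⟩
    intro ε hε
    have hεα : ε < α := lt_of_lt_of_le hε.2 (by
      unfold epsdb; rw [if_neg (by push_neg; linarith)])
    set Q := polySol μ P with hQ
    set w : ℝ → ℝ := fun t => z t - Q.eval t with hw
    have hwc : ContinuousOn w (Set.Ici T) := hz.sub (Polynomial.continuous_aeval Q).continuousOn
    have hwode : ∀ t > T, HasDerivAt w (μ * w t + G t) t := by
      intro t ht
      have h1 := (hode t ht).sub (Q.hasDerivAt t)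
      have h2 : (Polynomial.derivative Q).eval t = μ * Q.eval t + P.eval t := by
        rw [polySol_spec (ne_of_gt hμ) P]; simp [hQ]
      refine h1.congr_deriv ?_
      rw [h2, hw]; ring
    set h : ℝ → ℝ := fun s => Real.exp (-(μ * s)) * G s with hh
    have hhc : ContinuousOn h (Set.Ici T) :=
      ((Real.continuous_exp.comp ((continuous_const.mul continuous_id).neg)).continuousOn).mul hG
    have hhB : ∀ s ≥ T, |h s| ≤ C * Real.exp (-((μ + α) * s)) := by
      intro s hs
      rw [hh, abs_mul, abs_of_pos (Real.exp_pos _)]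
      calc Real.exp (-(μ * s)) * |G s| ≤ Real.exp (-(μ * s)) * (C * Real.exp (-(α * s))) :=
            mul_le_mul_of_nonneg_left (hB s hs) (le_of_lt (Real.exp_pos _))
        _ = C * Real.exp (-((μ + α) * s)) := by
            rw [mul_comm (Real.exp _) _, mul_assoc, ← Real.exp_add]
            congr 2
            ring
    have hμα : 0 < μ + α := by linarith
    have hint : MeasureTheory.IntegrableOn h (Set.Ioi T) :=
      integrableOn_of_expbound hμα hhc hhB
    have hlim1 : Filter.Tendsto (fun t => Real.exp (-(μ * t)) * w t) atTop (nhds 0) := by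
      have h1 := hgrow hμ
      have h2 := poly_mul_exp_tendsto hμ Q
      have := h1.sub h2
      rw [sub_zero] at this
      apply this.congr
      intro t
      rw [hw]; ring
    have hlim2 : Filter.Tendsto (fun t => ∫ s in T..t, h s) atTop
        (nhds (∫ s in Set.Ioi T, h s)) :=
      MeasureTheory.intervalIntegral_tendsto_integral_Ioi T hint Filter.tendsto_id
    have hrepr : ∀ t ≥ T, Real.exp (-(μ * t)) * w t
        = Real.exp (-(μ * T)) * w T + ∫ s in T..t, h s := by
      intro t ht
      have := ode_rep hwc hG hwode (le_refl T) ht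
      rw [hh]
      linarith [this]
    have hzero : Real.exp (-(μ * T)) * w T + (∫ s in Set.Ioi T, h s) = 0 := by
      have hlhs : Filter.Tendsto (fun t => Real.exp (-(μ * t)) * w t) atTop
          (nhds (Real.exp (-(μ * T)) * w T + ∫ s in Set.Ioi T, h s)) := by
        apply Filter.Tendsto.congr' _ ((tendsto_const_nhds (α := ℝ)).add hlim2)
        filter_upwards [Filter.eventually_ge_atTop T] with t ht
        exact (hrepr t ht).symm
      exact tendsto_nhds_unique hlhs hlim1
    refine ⟨C / (μ + α) + 1, max T 0, by positivity, ?_⟩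
    intro t ht
    have htT : T ≤ t := le_trans (le_max_left _ _) ht
    have ht0 : 0 ≤ t := le_trans (le_max_right _ _) ht
    have hsplit := integral_Ioi_split htT hint
    have hwt : Real.exp (-(μ * t)) * w t = -∫ s in Set.Ioi t, h s := by
      rw [hrepr t htT]
      linarith [hsplit, hzero]
    have htail : |∫ s in Set.Ioi t, h s| ≤ C * Real.exp (-((μ + α) * t)) / (μ + α) := by
      apply tail_bound hμα (le_of_lt hC) (hint.mono (Set.Ioi_subset_Ioi htT) le_rfl)
      exact fun s hs => hhB s (le_trans htT hs)
    have habs : Real.exp (-(μ * t)) * |w t| ≤ C * Real.exp (-((μ + α) * t)) / (μ + α) := by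
      rw [← abs_of_pos (Real.exp_pos (-(μ * t))), ← abs_mul, hwt, abs_neg]
      exact htail
    have hfin := mul_le_mul_of_nonneg_left habs (le_of_lt (Real.exp_pos (μ * t)))
    have hL : Real.exp (μ * t) * (Real.exp (-(μ * t)) * |w t|) = |w t| := by
      rw [← mul_assoc, ← Real.exp_add]; simp
    have hR : Real.exp (μ * t) * (C * Real.exp (-((μ + α) * t)) / (μ + α))
        = C * Real.exp (-(α * t)) / (μ + α) := by
      rw [mul_comm, div_mul_eq_mul_div, mul_assoc, ← Real.exp_add]
      congr 3
      ring
    rw [hL, hR] at hfin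
    have hee : Real.exp (-(α * t)) ≤ Real.exp (-(ε * t)) :=
      Real.exp_le_exp.mpr (by nlinarith [hε.1])
    calc |z t - Q.eval t| = |w t| := rfl
      _ ≤ C * Real.exp (-(α * t)) / (μ + α) := hfin
      _ ≤ C * Real.exp (-(ε * t)) / (μ + α) := by
          gcongr <;> nlinarith [hεα, ht0, hε.1]
      _ = (C / (μ + α)) * Real.exp (-(ε * t)) := by ring
      _ ≤ (C / (μ + α) + 1) * Real.exp (-(ε * t)) := by
          have := Real.exp_pos (-(ε * t)); nlinarith

lemma epsdb_pos {δ β : ℝ} (hδ : 0 < δ) : 0 < epsdb δ β := by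
  unfold epsdb; split_ifs with h
  · exact lt_min hδ h
  · exact hδ

lemma mulVec_contOn {n : ℕ} {f : ℝ → Fin n → ℝ} {s : Set ℝ} (M : Matrix (Fin n) (Fin n) ℝ)
    (hf : ContinuousOn f s) (i : Fin n) :
    ContinuousOn (fun t => M.mulVec (f t) i) s := by
  simp only [Matrix.mulVec, dotProduct]
  apply continuousOn_finset_sum
  intro j _
  exact continuousOn_const.mul ((continuous_apply j).comp_continuousOn hf)

lemma mulVec_norm_bound {n : ℕ} (M : Matrix (Fin n) (Fin n) ℝ) (v : Fin n → ℝ) (i : Fin n) :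
    |M.mulVec v i| ≤ ‖LinearMap.toContinuousLinearMap M.mulVecLin‖ * ‖v‖ := by
  have h1 : |M.mulVec v i| ≤ ‖M.mulVec v‖ := by
    rw [← Real.norm_eq_abs]
    exact norm_le_pi_norm (M.mulVec v) i
  have h2 : ‖M.mulVec v‖ = ‖(LinearMap.toContinuousLinearMap M.mulVecLin) v‖ := by
    rw [LinearMap.coe_toContinuousLinearMap', Matrix.mulVecLin_apply]
  refine le_trans h1 ?_
  rw [h2]
  exact (LinearMap.toContinuousLinearMap M.mulVecLin).le_opNorm v

lemma mulVec_norm_bound' {n : ℕ} (M : Matrix (Fin n) (Fin n) ℝ) (v : Fin n → ℝ) :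
    ‖M.mulVec v‖ ≤ ‖LinearMap.toContinuousLinearMap M.mulVecLin‖ * ‖v‖ := by
  have h2 : ‖M.mulVec v‖ = ‖(LinearMap.toContinuousLinearMap M.mulVecLin) v‖ := by
    rw [LinearMap.coe_toContinuousLinearMap', Matrix.mulVecLin_apply]
  rw [h2]
  exact (LinearMap.toContinuousLinearMap M.mulVecLin).le_opNorm v

lemma exp_decay_tendsto {c ε : ℝ} (hε : 0 < ε) :
    Filter.Tendsto (fun t => c * Real.exp (-(ε * t))) atTop (nhds 0) := by
  have h1 : Filter.Tendsto (fun t : ℝ => -(ε * t)) atTop atBot := by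
    simpa using (Filter.tendsto_id (α := ℝ)).const_mul_atTop_of_neg (neg_neg_iff_pos.mpr hε)
  have h2 := Real.tendsto_exp_atBot.comp h1
  simpa using h2.const_mul c

/-- two polynomial functions whose difference tends to 0 in norm are equal -/
lemma polyfun_eq_of_tendsto {n : ℕ} {q1 q2 : ℝ → Fin n → ℝ}
    (h1 : IsPolyFun q1) (h2 : IsPolyFun q2)
    (h : Filter.Tendsto (fun t => ‖q1 t - q2 t‖) atTop (nhds 0)) : q1 = q2 := by
  obtain ⟨N1, a1, ha1⟩ := h1
  obtain ⟨N2, a2, ha2⟩ := h2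
  funext t
  funext i
  set M := max N1 N2 with hM
  set b : ℕ → ℝ := fun k => (if k ∈ Finset.range (N1+1) then a1 k i else 0)
    - (if k ∈ Finset.range (N2+1) then a2 k i else 0) with hb
  have hrep : ∀ s : ℝ, q1 s i - q2 s i = ∑ k ∈ Finset.range (M + 1), s ^ k * b k := by
    intro s
    have e1 : q1 s i = ∑ k ∈ Finset.range (M+1),
        s ^ k * (if k ∈ Finset.range (N1+1) then a1 k i else 0) := by
      rw [ha1 s]
      rw [Finset.sum_apply]
      rw [← Finset.sum_subset (Finset.range_subset_range.mpr (by omega : N1 + 1 ≤ M + 1))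
        (fun x _ hx => by simp [hx])]
      apply Finset.sum_congr rfl
      intro k hk
      simp [hk]
    have e2 : q2 s i = ∑ k ∈ Finset.range (M+1),
        s ^ k * (if k ∈ Finset.range (N2+1) then a2 k i else 0) := by
      rw [ha2 s]
      rw [Finset.sum_apply]
      rw [← Finset.sum_subset (Finset.range_subset_range.mpr (by omega : N2 + 1 ≤ M + 1))
        (fun x _ hx => by simp [hx])]
      apply Finset.sum_congr rfl
      intro k hk
      simp [hk]
    rw [e1, e2, ← Finset.sum_sub_distrib]
    exact Finset.sum_congr rfl fun k _ => by rw [hb]; ring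
  have htend : Filter.Tendsto (fun s => ∑ k ∈ Finset.range (M + 1), s ^ k * b k)
      atTop (nhds 0) := by
    apply squeeze_zero_norm _ h
    intro s
    rw [← hrep s, Real.norm_eq_abs]
    have := norm_le_pi_norm (q1 s - q2 s) i
    simpa using this
  have := polyfun_vanish htend t
  have h0 : q1 t i - q2 t i = 0 := by rw [hrep t]; exact this
  linarith

set_option maxHeartbeats 2000000 in
/-- Lemma 2.2: approximation lemma for `y' = -(A - λI)y + p(t) + g(t)`
where `A` is diagonalizable with positive eigenvalues `λ_1 < … < λ_d`. -/
theorem stmt8 (n d : ℕ) (hn : 0 < n) (hd : 0 < d)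
    (S : Matrix (Fin n) (Fin n) ℝ) (hS : IsUnit S)
    (Λ : Fin n → ℝ) (hΛ : ∀ i, 0 < Λ i)
    (A : Matrix (Fin n) (Fin n) ℝ) (hA : A = S⁻¹ * Matrix.diagonal Λ * S)
    (lam : Fin d → ℝ) (hmono : StrictMono lam)
    (hrange : Set.range Λ = Set.range lam)
    (p : ℝ → Fin n → ℝ) (hp : IsPolyFun p)
    (T α lamb : ℝ) (hα : 0 < α) (hlamb : 0 < lamb)
    (g : ℝ → Fin n → ℝ) (hgcont : ContinuousOn g (Set.Ici T))
    (hg : ∃ C T' : ℝ, 0 < C ∧ ∀ t ≥ T', ‖g t‖ ≤ C * Real.exp (-α * t))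
    (y : ℝ → Fin n → ℝ) (hycont : ContinuousOn y (Set.Ici T))
    (hode : ∀ t > T, HasDerivAt y (lamb • y t - A.mulVec (y t) + p t + g t) t)
    (hcond : lam ⟨0, hd⟩ < lamb →
      ∀ lamstar : ℝ, IsGreatest {x : ℝ | (∃ j, lam j = x) ∧ x < lamb} lamstar →
        Filter.Tendsto (fun t => Real.exp ((lamstar - lamb) * t) * ‖y t‖)
          Filter.atTop (nhds 0)) :
    ∃! q : ℝ → Fin n → ℝ, IsPolyFun q ∧
      (∀ t : ℝ, HasDerivAt q (lamb • q t - A.mulVec (q t) + p t) t) ∧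
      ∀ ε ∈ Set.Ioo 0 (⨅ j, epsdb α (lam j - lamb)),
        ∃ C T'' : ℝ, 0 < C ∧ ∀ t ≥ T'', ‖y t - q t‖ ≤ C * Real.exp (-ε * t) := by
  classical
  obtain ⟨C, T', hCpos, hgb⟩ := hg
  obtain ⟨N, a, hpa⟩ := hp
  have hSdet : IsUnit S.det := (Matrix.isUnit_iff_isUnit_det S).mp hS
  have hSS : S * S⁻¹ = 1 := Matrix.mul_nonsing_inv S hSdet
  have hSS' : S⁻¹ * S = 1 := Matrix.nonsing_inv_mul S hSdet
  set KS : ℝ := ‖LinearMap.toContinuousLinearMap (Matrix.mulVecLin S)‖ with hKS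
  set KSi : ℝ := ‖LinearMap.toContinuousLinearMap (Matrix.mulVecLin S⁻¹)‖ with hKSi
  have hKSnn : 0 ≤ KS := norm_nonneg _
  have hKSinn : 0 ≤ KSi := norm_nonneg _
  set T0 : ℝ := max T T' with hT0
  have hTT0 : T ≤ T0 := le_max_left _ _
  -- diagonalized quantities
  set z : Fin n → ℝ → ℝ := fun i t => S.mulVec (y t) i with hz
  set Gz : Fin n → ℝ → ℝ := fun i t => S.mulVec (g t) i with hGz
  set Pz : Fin n → Polynomial ℝ := fun i =>
    ∑ k ∈ Finset.range (N + 1), Polynomial.C (S.mulVec (a k) i) * Polynomial.X ^ k with hPz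
  have hPzeval : ∀ (i : Fin n) (t : ℝ), (Pz i).eval t
      = ∑ k ∈ Finset.range (N + 1), S.mulVec (a k) i * t ^ k := by
    intro i t
    rw [hPz, Polynomial.eval_finset_sum]
    exact Finset.sum_congr rfl fun k _ => by
      rw [Polynomial.eval_mul, Polynomial.eval_C, Polynomial.eval_pow, Polynomial.eval_X]
  have hPzS : ∀ (t : ℝ) (i : Fin n), S.mulVec (p t) i = (Pz i).eval t := by
    intro t i
    rw [hPzeval, hpa t]
    simp only [Matrix.mulVec, dotProduct, Finset.sum_apply, Pi.smul_apply, smul_eq_mul]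
    simp only [Finset.mul_sum, Finset.sum_mul]
    rw [Finset.sum_comm]
    exact Finset.sum_congr rfl fun k _ => Finset.sum_congr rfl fun j _ => by ring
  -- the key matrix identities
  have hSA : S * A = Matrix.diagonal Λ * S := by
    rw [hA, ← Matrix.mul_assoc, ← Matrix.mul_assoc, hSS, Matrix.one_mul]
  have hAS : A * S⁻¹ = S⁻¹ * Matrix.diagonal Λ := by
    rw [hA, Matrix.mul_assoc, hSS, Matrix.mul_one]
  -- continuity of components
  have hzc : ∀ i, ContinuousOn (z i) (Set.Ici T0) := fun i =>
    mulVec_contOn S (hycont.mono (Set.Ici_subset_Ici.mpr hTT0)) i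
  have hGzc : ∀ i, ContinuousOn (Gz i) (Set.Ici T0) := fun i =>
    mulVec_contOn S (hgcont.mono (Set.Ici_subset_Ici.mpr hTT0)) i
  -- the component ODEs
  have hzode : ∀ (i : Fin n), ∀ t > T0, HasDerivAt (z i)
      ((lamb - Λ i) * z i t + (Pz i).eval t + Gz i t) t := by
    intro i t ht
    have htT : t > T := lt_of_le_of_lt hTT0 ht
    have hy := hode t htT
    have hcomp : HasDerivAt (z i)
        (S.mulVec (lamb • y t - A.mulVec (y t) + p t + g t) i) t := by
      simp only [hz, Matrix.mulVec, dotProduct]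
      exact HasDerivAt.fun_sum fun j _ => ((hasDerivAt_pi.mp hy) j).const_mul (S i j)
    convert hcomp using 1
    have hvec : S.mulVec (lamb • y t - A.mulVec (y t) + p t + g t)
        = lamb • S.mulVec (y t) - (Matrix.diagonal Λ).mulVec (S.mulVec (y t))
          + S.mulVec (p t) + S.mulVec (g t) := by
      rw [Matrix.mulVec_add, Matrix.mulVec_add, Matrix.mulVec_sub, Matrix.mulVec_smul,
        Matrix.mulVec_mulVec, hSA, ← Matrix.mulVec_mulVec]
    rw [hvec]
    simp only [Pi.add_apply, Pi.sub_apply, Pi.smul_apply, smul_eq_mul,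
      Matrix.mulVec_diagonal]
    rw [hPzS t i]
    ring
  -- the exponential bound on Gz
  set C0 : ℝ := KS * C + 1 with hC0
  have hC0pos : 0 < C0 := by positivity
  have hGzb : ∀ (i : Fin n), ∀ t ≥ T0, |Gz i t| ≤ C0 * Real.exp (-(α * t)) := by
    intro i t ht
    have h1 := mulVec_norm_bound S (g t) i
    have h2 := hgb t (le_trans (le_max_right _ _) ht)
    have h3 : Real.exp (-α * t) = Real.exp (-(α * t)) := by rw [neg_mul]
    rw [h3] at h2
    have hexp := Real.exp_pos (-(α * t))
    calc |Gz i t| ≤ KS * ‖g t‖ := h1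
      _ ≤ KS * (C * Real.exp (-(α * t))) := by nlinarith
      _ ≤ C0 * Real.exp (-(α * t)) := by rw [hC0]; nlinarith
  -- growth condition for expanding modes
  have hgrow : ∀ (i : Fin n), 0 < lamb - Λ i →
      Filter.Tendsto (fun t => Real.exp (-((lamb - Λ i) * t)) * z i t) atTop (nhds 0) := by
    intro i hi
    have hiΛ : Λ i < lamb := by linarith
    have hmem : Λ i ∈ Set.range lam := by
      rw [← hrange]; exact Set.mem_range_self i
    obtain ⟨j, hj⟩ := hmem
    have hl1 : lam ⟨0, hd⟩ < lamb := by
      have : lam ⟨0, hd⟩ ≤ lam j := hmono.monotone (by simp [Fin.le_def])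
      linarith [hj ▸ this]
    have hFne : ((Finset.image lam Finset.univ).filter (fun x => x < lamb)).Nonempty := ⟨Λ i, by
      rw [Finset.mem_filter]
      exact ⟨Finset.mem_image.mpr ⟨j, Finset.mem_univ j, hj⟩, hiΛ⟩⟩
    set lamstar : ℝ := ((Finset.image lam Finset.univ).filter (fun x => x < lamb)).max' hFne
      with hls
    have hstar : IsGreatest {x : ℝ | (∃ j, lam j = x) ∧ x < lamb} lamstar := by
      constructor
      · have hmm := Finset.max'_mem _ hFne
        rw [Finset.mem_filter] at hmm
        obtain ⟨h1, h2⟩ := hmm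
        obtain ⟨j', _, hj'⟩ := Finset.mem_image.mp h1
        exact ⟨⟨j', hj'⟩, h2⟩
      · intro x hx
        apply Finset.le_max'
        rw [Finset.mem_filter]
        obtain ⟨⟨j', hj'⟩, h2⟩ := hx
        exact ⟨Finset.mem_image.mpr ⟨j', Finset.mem_univ j', hj'⟩, h2⟩
    have htendy := hcond hl1 lamstar hstar
    have hΛstar : Λ i ≤ lamstar := hstar.2 ⟨⟨j, hj⟩, hiΛ⟩
    apply squeeze_zero_norm' (a := fun t => KS * (Real.exp ((lamstar - lamb) * t) * ‖y t‖))
    · filter_upwards [Filter.eventually_ge_atTop (0:ℝ)] with t ht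
      have h1 : |z i t| ≤ KS * ‖y t‖ := mulVec_norm_bound S (y t) i
      have h2 : Real.exp (-((lamb - Λ i) * t)) ≤ Real.exp ((lamstar - lamb) * t) :=
        Real.exp_le_exp.mpr (by nlinarith)
      have h3 : 0 ≤ ‖y t‖ := norm_nonneg _
      rw [Real.norm_eq_abs, abs_mul, abs_of_pos (Real.exp_pos _)]
      calc Real.exp (-((lamb - Λ i) * t)) * |z i t|
          ≤ Real.exp ((lamstar - lamb) * t) * (KS * ‖y t‖) := by
            apply mul_le_mul h2 h1 (abs_nonneg _) (le_of_lt (Real.exp_pos _))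
        _ = KS * (Real.exp ((lamstar - lamb) * t) * ‖y t‖) := by ring
    · have := htendy.const_mul KS
      simpa using this
  -- apply the scalar lemma to each component
  have hmain := fun i : Fin n => scalar_main (μ := lamb - Λ i) hα hC0pos (Pz i)
    (hzc i) (hGzc i) (hzode i) (hGzb i) (hgrow i)
  choose Q hQder hQbound using hmain
  -- build the polynomial q
  set Qv : ℝ → Fin n → ℝ := fun t j => (Q j).eval t with hQv
  set q : ℝ → Fin n → ℝ := fun t => (S⁻¹).mulVec (Qv t) with hq
  have hy_eq : ∀ t, y t = (S⁻¹).mulVec (fun j => z j t) := by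
    intro t
    have : (fun j => z j t) = S.mulVec (y t) := by funext j; rfl
    rw [this, Matrix.mulVec_mulVec, hSS', Matrix.one_mulVec]
  -- infimum facts
  have hbdd : BddBelow (Set.range fun j : Fin d => epsdb α (lam j - lamb)) :=
    Set.Finite.bddBelow (Set.finite_range _)
  have hinf_le : ∀ i : Fin n, (⨅ j, epsdb α (lam j - lamb)) ≤ epsdb α (Λ i - lamb) := by
    intro i
    have hmem : Λ i ∈ Set.range lam := by rw [← hrange]; exact Set.mem_range_self i
    obtain ⟨j, hj⟩ := hmem
    rw [← hj]
    exact ciInf_le hbdd j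
  have hinf_pos : 0 < ⨅ j, epsdb α (lam j - lamb) := by
    have hne : Nonempty (Fin d) := ⟨⟨0, hd⟩⟩
    obtain ⟨j0, hj0⟩ := Finite.exists_min (fun j : Fin d => epsdb α (lam j - lamb))
    have h1 : epsdb α (lam j0 - lamb) ≤ ⨅ j, epsdb α (lam j - lamb) := le_ciInf hj0
    have h2 : 0 < epsdb α (lam j0 - lamb) := epsdb_pos hα
    linarith
  -- polynomiality of q
  have hqpoly : IsPolyFun q := by
    set N' : ℕ := Finset.univ.sup (fun i : Fin n => (Q i).natDegree) with hN'
    refine ⟨N', fun k => (S⁻¹).mulVec (fun j => (Q j).coeff k), ?_⟩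
    intro t
    funext i
    have hdeg : ∀ j : Fin n, (Q j).natDegree < N' + 1 := fun j =>
      Nat.lt_succ_of_le (Finset.le_sup (f := fun i : Fin n => (Q i).natDegree)
        (Finset.mem_univ j))
    simp only [hq, hQv, Matrix.mulVec, dotProduct, Finset.sum_apply, Pi.smul_apply,
      smul_eq_mul]
    have he : ∀ j : Fin n, (Q j).eval t
        = ∑ k ∈ Finset.range (N' + 1), (Q j).coeff k * t ^ k :=
      fun j => Polynomial.eval_eq_sum_range' (hdeg j) t
    calc ∑ j, S⁻¹ i j * (Q j).eval t
        = ∑ j, ∑ k ∈ Finset.range (N' + 1), S⁻¹ i j * ((Q j).coeff k * t ^ k) := by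
          exact Finset.sum_congr rfl fun j _ => by rw [he j, Finset.mul_sum]
      _ = ∑ k ∈ Finset.range (N' + 1), ∑ j, S⁻¹ i j * ((Q j).coeff k * t ^ k) :=
          Finset.sum_comm
      _ = ∑ k ∈ Finset.range (N' + 1), t ^ k * ∑ j, S⁻¹ i j * (Q j).coeff k := by
          refine Finset.sum_congr rfl fun k _ => ?_
          rw [Finset.mul_sum]
          exact Finset.sum_congr rfl fun j _ => by ring
  -- derivative identity for q
  have hqder : ∀ t : ℝ, HasDerivAt q (lamb • q t - A.mulVec (q t) + p t) t := by
    intro t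
    have hqd : HasDerivAt q ((S⁻¹).mulVec (fun j => ((Q j).derivative).eval t)) t := by
      apply hasDerivAt_pi.mpr
      intro i
      have : (fun t => q t i) = fun t => ∑ j, S⁻¹ i j * (Q j).eval t := by
        funext s
        simp [hq, hQv, Matrix.mulVec, dotProduct]
      rw [this]
      have hd : HasDerivAt (fun t => ∑ j, S⁻¹ i j * (Q j).eval t)
          (∑ j, S⁻¹ i j * ((Q j).derivative).eval t) t :=
        HasDerivAt.fun_sum fun j _ => ((Q j).hasDerivAt t).const_mul (S⁻¹ i j)
      simpa [Matrix.mulVec, dotProduct] using hd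
    convert hqd using 1
    have hder_eval : ∀ j : Fin n, ((Q j).derivative).eval t
        = (lamb - Λ j) * (Q j).eval t + (Pz j).eval t := by
      intro j
      rw [hQder j, Polynomial.eval_add, Polynomial.eval_smul, smul_eq_mul]
    have hp_eq : p t = (S⁻¹).mulVec (fun j => (Pz j).eval t) := by
      have h1 : (fun j => (Pz j).eval t) = S.mulVec (p t) := by
        funext j; rw [hPzS t j]
      rw [h1, Matrix.mulVec_mulVec, hSS', Matrix.one_mulVec]
    have hAq : A.mulVec (q t) = (S⁻¹).mulVec (fun j => Λ j * Qv t j) := by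
      have hDv : (Matrix.diagonal Λ).mulVec (Qv t) = fun j => Λ j * Qv t j := by
        funext j
        rw [Matrix.mulVec_diagonal]
      rw [hq, Matrix.mulVec_mulVec, hAS, ← Matrix.mulVec_mulVec, hDv]
    have hlq : lamb • q t = (S⁻¹).mulVec (lamb • Qv t) := by
      rw [hq, Matrix.mulVec_smul]
    rw [hlq, hAq, hp_eq, ← Matrix.mulVec_sub, ← Matrix.mulVec_add]
    have harg : (lamb • Qv t - (fun j => Λ j * Qv t j) + fun j => (Pz j).eval t)
        = fun j => ((Q j).derivative).eval t := by
      funext j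
      simp only [Pi.add_apply, Pi.sub_apply, Pi.smul_apply, smul_eq_mul]
      rw [hder_eval j]
      simp only [hQv]
      ring
    rw [harg]
  -- decay for q
  have hqdec : ∀ ε ∈ Set.Ioo 0 (⨅ j, epsdb α (lam j - lamb)),
      ∃ C T'' : ℝ, 0 < C ∧ ∀ t ≥ T'', ‖y t - q t‖ ≤ C * Real.exp (-ε * t) := by
    intro ε hε
    have hεi : ∀ i : Fin n, ε ∈ Set.Ioo 0 (epsdb α (-(lamb - Λ i))) := by
      intro i
      rw [neg_sub]
      exact ⟨hε.1, lt_of_lt_of_le hε.2 (hinf_le i)⟩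
    choose Ci Ti hCi hDi using fun i => hQbound i ε (hεi i)
    have hne : Nonempty (Fin n) := ⟨⟨0, hn⟩⟩
    set CC : ℝ := ∑ i, Ci i with hCC
    have hCCpos : 0 < CC := Finset.sum_pos (fun i _ => hCi i) Finset.univ_nonempty
    set TT : ℝ := Finset.univ.sup' Finset.univ_nonempty Ti with hTT
    refine ⟨KSi * CC + 1, TT, by positivity, ?_⟩
    intro t ht
    have hti : ∀ i : Fin n, t ≥ Ti i := fun i =>
      le_trans (Finset.le_sup' Ti (Finset.mem_univ i)) ht
    have hyq : y t - q t = (S⁻¹).mulVec (fun j => z j t - Qv t j) := by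
      rw [hy_eq t, hq, ← Matrix.mulVec_sub]
      rfl
    have hbound : ‖(fun j => z j t - Qv t j : Fin n → ℝ)‖ ≤ CC * Real.exp (-(ε * t)) := by
      apply pi_norm_le_iff_of_nonneg (by positivity) |>.mpr
      intro i
      rw [Real.norm_eq_abs]
      calc |z i t - Qv t i| ≤ Ci i * Real.exp (-(ε * t)) := hDi i t (hti i)
        _ ≤ CC * Real.exp (-(ε * t)) := by
            have h1 : Ci i ≤ CC := Finset.single_le_sum (fun j _ => le_of_lt (hCi j))
              (Finset.mem_univ i)
            have h2 := Real.exp_pos (-(ε * t))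
            nlinarith
    calc ‖y t - q t‖ ≤ KSi * ‖(fun j => z j t - Qv t j : Fin n → ℝ)‖ := by
          rw [hyq]; exact mulVec_norm_bound' S⁻¹ _
      _ ≤ KSi * (CC * Real.exp (-(ε * t))) := by nlinarith [Real.exp_pos (-(ε * t))]
      _ ≤ (KSi * CC + 1) * Real.exp (-ε * t) := by
          rw [neg_mul]
          nlinarith [Real.exp_pos (-(ε * t))]
  refine ⟨q, ⟨hqpoly, hqder, hqdec⟩, ?_⟩
  -- uniqueness
  rintro q' ⟨hq'poly, hq'der, hq'dec⟩
  set ε0 : ℝ := (⨅ j, epsdb α (lam j - lamb)) / 2 with hε0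
  have hε0mem : ε0 ∈ Set.Ioo 0 (⨅ j, epsdb α (lam j - lamb)) :=
    ⟨half_pos hinf_pos, half_lt_self hinf_pos⟩
  obtain ⟨C1, T1, hC1, hB1⟩ := hq'dec ε0 hε0mem
  obtain ⟨C2, T2, hC2, hB2⟩ := hqdec ε0 hε0mem
  apply polyfun_eq_of_tendsto hq'poly hqpoly
  apply squeeze_zero_norm' (a := fun t => (C1 + C2) * Real.exp (-(ε0 * t)))
  · filter_upwards [Filter.eventually_ge_atTop (max T1 T2)] with t ht
    rw [Real.norm_eq_abs, abs_of_nonneg (norm_nonneg _)]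
    have h1 := hB1 t (le_trans (le_max_left _ _) ht)
    have h2 := hB2 t (le_trans (le_max_right _ _) ht)
    have h3 : q' t - q t = (y t - q t) - (y t - q' t) := by abel
    calc ‖q' t - q t‖ ≤ ‖y t - q t‖ + ‖y t - q' t‖ := by rw [h3]; exact norm_sub_le _ _
      _ ≤ (C1 + C2) * Real.exp (-(ε0 * t)) := by rw [neg_mul] at h1 h2; linarith
  · exact exp_decay_tendsto hε0mem.1
end

section
/- Let X be a normed space, T' ∈ ℝ, g : (T',∞) → X, and ψ, φ real-valued functions on (T,∞) with ψ(t), φ(t) → ∞ and φ(t)^λ/ψ(t) → 0 for every λ > 0. Let 0 ≤ γ_1 < … < γ_N. If X-valued polynomials p_1,…,p_N satisfy ‖g(t) − Σ_{k=1}^N p_k(φ(t)) ψ(t)^{-γ_k}‖ = O(ψ(t)^{-μ}) for some μ > γ_N, then the polynomials p_1,…,p_N are unique. -/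
open Filter Real

lemma polyPad {X : Type*} [AddCommGroup X] [Module ℝ X] {n m : ℕ} (h : n ≤ m)
    (a : ℕ → X) (t : ℝ) :
    ∑ k ∈ Finset.range (n + 1), t ^ k • a k
      = ∑ k ∈ Finset.range (m + 1), t ^ k • (if k ≤ n then a k else 0) := by
  have h1 : ∑ k ∈ Finset.range (m + 1), t ^ k • (if k ≤ n then a k else 0)
      = ∑ k ∈ Finset.range (n + 1), t ^ k • (if k ≤ n then a k else 0) :=
    (Finset.sum_subset (Finset.range_subset_range.2 (by omega)) (fun k _ hk => by
      rw [if_neg (fun hkn => hk (Finset.mem_range.2 (by omega))), smul_zero])).symm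
  rw [h1]
  exact Finset.sum_congr rfl fun k hk => by
    rw [if_pos (by simpa [Nat.lt_succ_iff] using Finset.mem_range.1 hk)]

lemma IsPolyFun.sub' {X : Type*} [AddCommGroup X] [Module ℝ X] {q r : ℝ → X}
    (hq : IsPolyFun q) (hr : IsPolyFun r) : IsPolyFun (fun t => q t - r t) := by
  obtain ⟨n, a, ha⟩ := hq
  obtain ⟨m, b, hb⟩ := hr
  refine ⟨max n m, fun k => (if k ≤ n then a k else 0) - (if k ≤ m then b k else 0),
    fun t => ?_⟩
  show q t - r t = _
  rw [ha, hb, polyPad (le_max_left n m) a t, polyPad (le_max_right n m) b t,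
    ← Finset.sum_sub_distrib]
  exact Finset.sum_congr rfl fun k _ => (smul_sub _ _ _).symm

/-- A polynomial tending to `0` along a nontrivial filter `≤ atTop` has zero coefficients. -/
lemma poly_coeff_zero {X : Type*} [NormedAddCommGroup X] [NormedSpace ℝ X] :
    ∀ (n : ℕ) (a : ℕ → X) (l : Filter ℝ) [l.NeBot], l ≤ Filter.atTop →
    Filter.Tendsto (fun t => ∑ k ∈ Finset.range (n + 1), t ^ k • a k) l (nhds 0) →
    ∀ k ≤ n, a k = 0 := by
  intro n
  induction n with
  | zero =>
    intro a l _ hl h k hk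
    interval_cases k
    have he : (fun t : ℝ => ∑ k ∈ Finset.range 1, t ^ k • a k) = fun _ => a 0 := by
      funext t; simp
    rw [he] at h
    exact tendsto_nhds_unique tendsto_const_nhds h
  | succ n ih =>
    intro a l _ hl h k hk
    have hinv : Filter.Tendsto (fun t : ℝ => t⁻¹) Filter.atTop (nhds 0) :=
      tendsto_inv_atTop_zero
    -- the auxiliary function
    set g : ℝ → X := fun t => (t⁻¹) ^ (n + 1) • ∑ k ∈ Finset.range (n + 2), t ^ k • a k
      with hg
    have hgtop : Filter.Tendsto g Filter.atTop (nhds (a (n + 1))) := by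
      have heq : g =ᶠ[Filter.atTop]
          fun t => ∑ k ∈ Finset.range (n + 2), (t⁻¹) ^ (n + 1 - k) • a k := by
        filter_upwards [Filter.eventually_ge_atTop (1 : ℝ)] with t ht
        have ht0 : t ≠ 0 := by linarith
        rw [hg]
        simp only [Finset.smul_sum, smul_smul]
        refine Finset.sum_congr rfl fun k hk => ?_
        have hk' : k ≤ n + 1 := by simpa [Nat.lt_succ_iff] using Finset.mem_range.1 hk
        congr 1
        calc (t⁻¹) ^ (n + 1) * t ^ k
            = (t⁻¹) ^ (n + 1 - k) * ((t⁻¹) ^ k * t ^ k) := by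
              rw [← mul_assoc, ← pow_add]; congr 2; omega
          _ = (t⁻¹) ^ (n + 1 - k) := by
              rw [inv_pow t k, inv_mul_cancel₀ (pow_ne_zero _ ht0), mul_one]
      have hlim : Filter.Tendsto
          (fun t : ℝ => ∑ k ∈ Finset.range (n + 2), (t⁻¹) ^ (n + 1 - k) • a k)
          Filter.atTop (nhds (∑ k ∈ Finset.range (n + 2),
            if k = n + 1 then a (n + 1) else (0 : X))) := by
        refine tendsto_finset_sum _ fun k hk => ?_
        by_cases hkn : k = n + 1
        · subst hkn
          simp only [Nat.sub_self, pow_zero, if_pos rfl]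
          simpa using tendsto_const_nhds (α := X)
        · have hm : 1 ≤ n + 1 - k := by
            have : k ≤ n + 1 := by simpa [Nat.lt_succ_iff] using Finset.mem_range.1 hk
            omega
          rw [if_neg hkn]
          have : Filter.Tendsto (fun t : ℝ => (t⁻¹) ^ (n + 1 - k)) Filter.atTop
              (nhds 0) := by
            have := hinv.pow (n + 1 - k)
            simpa [zero_pow (by omega : n + 1 - k ≠ 0)] using this
          simpa using this.smul_const (a k)
      have hsum : (∑ k ∈ Finset.range (n + 2),
          if k = n + 1 then a (n + 1) else (0 : X)) = a (n + 1) := by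
        rw [Finset.sum_ite_eq' (Finset.range (n + 2)) (n + 1) (fun _ => a (n + 1))]
        simp
      rw [hsum] at hlim
      exact hlim.congr' heq.symm
    have hgzero : Filter.Tendsto g l (nhds 0) := by
      have h1 : Filter.Tendsto (fun t : ℝ => (t⁻¹) ^ (n + 1)) l (nhds 0) := by
        have := (hinv.pow (n + 1)).mono_left hl
        simpa [zero_pow (by omega : n + 1 ≠ 0)] using this
      have h2 := h1.smul h
      rw [zero_smul] at h2
      exact h2
    have han : a (n + 1) = 0 := tendsto_nhds_unique (hgtop.mono_left hl) hgzero
    rcases Nat.lt_succ_iff_lt_or_eq.1 (Nat.lt_succ_of_le hk) with hk' | hk'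
    · have h' : Filter.Tendsto (fun t => ∑ k ∈ Finset.range (n + 1), t ^ k • a k) l
          (nhds 0) := by
        refine h.congr fun t => ?_
        rw [Finset.sum_range_succ, han, smul_zero, add_zero]
      exact ih a l hl h' k (by omega)
    · rw [hk']; exact han

/-- `φ^i * ψ^(-α) → 0`. -/
lemma tendsto_poly_rpow {ψ φ : ℝ → ℝ}
    (hψ : Filter.Tendsto ψ Filter.atTop Filter.atTop)
    (hφ : Filter.Tendsto φ Filter.atTop Filter.atTop)
    (hcomp : ∀ lam > (0:ℝ),
      Filter.Tendsto (fun t => φ t ^ lam / ψ t) Filter.atTop (nhds 0))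
    (i : ℕ) {α : ℝ} (hα : 0 < α) :
    Filter.Tendsto (fun t => φ t ^ i * ψ t ^ (-α)) Filter.atTop (nhds 0) := by
  have hlam : (0:ℝ) < ((i : ℝ) + 1) / α := by positivity
  have h1 : Filter.Tendsto (fun t => (φ t ^ (((i : ℝ) + 1) / α) / ψ t) ^ α)
      Filter.atTop (nhds 0) := by
    have := (hcomp _ hlam).rpow_const (p := α) (Or.inr hα.le)
    simpa [Real.zero_rpow hα.ne'] using this
  refine squeeze_zero' ?_ ?_ h1
  · filter_upwards [hφ.eventually_ge_atTop 1, hψ.eventually_ge_atTop 1] with t h1 h2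
    have : (0:ℝ) < φ t := by linarith
    have : (0:ℝ) < ψ t := by linarith
    positivity
  · filter_upwards [hφ.eventually_ge_atTop 1, hψ.eventually_ge_atTop 1] with t hφ1 hψ1
    have hφ0 : (0:ℝ) < φ t := by linarith
    have hψ0 : (0:ℝ) < ψ t := by linarith
    have key : (φ t ^ (((i : ℝ) + 1) / α) / ψ t) ^ α = φ t ^ (i + 1) * ψ t ^ (-α) := by
      rw [Real.div_rpow (Real.rpow_nonneg hφ0.le _) hψ0.le, ← Real.rpow_natCast (φ t) (i + 1),
        ← Real.rpow_mul hφ0.le, div_mul_cancel₀ _ hα.ne', Real.rpow_neg hψ0.le,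
        div_eq_mul_inv]
      push_cast
      ring_nf
    rw [key]
    have hmono : φ t ^ i ≤ φ t ^ (i + 1) := pow_le_pow_right₀ hφ1 (Nat.le_succ i)
    exact mul_le_mul_of_nonneg_right hmono (Real.rpow_nonneg hψ0.le _)

/-- `ψ^(-α) • q(φ t) → 0` for a polynomial `q` and `α > 0`. -/
lemma tendsto_rpow_smul_poly {X : Type*} [NormedAddCommGroup X] [NormedSpace ℝ X]
    {ψ φ : ℝ → ℝ}
    (hψ : Filter.Tendsto ψ Filter.atTop Filter.atTop)
    (hφ : Filter.Tendsto φ Filter.atTop Filter.atTop)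
    (hcomp : ∀ lam > (0:ℝ),
      Filter.Tendsto (fun t => φ t ^ lam / ψ t) Filter.atTop (nhds 0))
    {q : ℝ → X} (hq : IsPolyFun q) {α : ℝ} (hα : 0 < α) :
    Filter.Tendsto (fun t => ψ t ^ (-α) • q (φ t)) Filter.atTop (nhds 0) := by
  obtain ⟨M, a, ha⟩ := hq
  have heq : (fun t => ψ t ^ (-α) • q (φ t))
      = fun t => ∑ k ∈ Finset.range (M + 1), (φ t ^ k * ψ t ^ (-α)) • a k := by
    funext t
    rw [ha, Finset.smul_sum]
    exact Finset.sum_congr rfl fun k _ => by rw [smul_smul, mul_comm]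
  rw [heq]
  have := tendsto_finset_sum (Finset.range (M + 1))
    (fun k _ => (tendsto_poly_rpow hψ hφ hcomp k hα).smul_const (a k))
  simpa using this

/-- Lemma 4.1: uniqueness of finite asymptotic expansions
`g(t) ≈ Σ_{k} p_k(φ(t)) ψ(t)^{-γ_k}` with remainder `O(ψ(t)^{-μ})`, `μ > γ_N`. -/
theorem stmt9 {X : Type*} [NormedAddCommGroup X] [NormedSpace ℝ X]
    (T' : ℝ) (g : ℝ → X) (ψ φ : ℝ → ℝ)
    (hψ : Filter.Tendsto ψ Filter.atTop Filter.atTop)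
    (hφ : Filter.Tendsto φ Filter.atTop Filter.atTop)
    (hcomp : ∀ lam > (0:ℝ),
      Filter.Tendsto (fun t => φ t ^ lam / ψ t) Filter.atTop (nhds 0))
    (N : ℕ) (hN : 1 ≤ N) (γ : Fin N → ℝ) (hγ0 : ∀ k, 0 ≤ γ k) (hγ : StrictMono γ)
    (p p' : Fin N → ℝ → X)
    (hp : ∀ k, IsPolyFun (p k)) (hp' : ∀ k, IsPolyFun (p' k))
    (μ μ' : ℝ) (hμ : ∀ k, γ k < μ) (hμ' : ∀ k, γ k < μ')
    (hest : ∃ C T₀ : ℝ, 0 < C ∧ ∀ t ≥ T₀,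
      ‖g t - ∑ k, ψ t ^ (-(γ k)) • p k (φ t)‖ ≤ C * ψ t ^ (-μ))
    (hest' : ∃ C T₀ : ℝ, 0 < C ∧ ∀ t ≥ T₀,
      ‖g t - ∑ k, ψ t ^ (-(γ k)) • p' k (φ t)‖ ≤ C * ψ t ^ (-μ')) :
    p = p' := by
  obtain ⟨C, T₀, hC, hb⟩ := hest
  obtain ⟨C', T₁, hC', hb'⟩ := hest'
  set m : ℝ := min μ μ' with hm
  set Q : Fin N → ℝ → X := fun k s => p k s - p' k s with hQdef
  have hQpoly : ∀ k, IsPolyFun (Q k) := fun k => (hp k).sub' (hp' k)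
  set F : ℝ → X := fun t => ∑ k, ψ t ^ (-(γ k)) • Q k (φ t) with hFdef
  have hF : ∀ᶠ t in Filter.atTop, ‖F t‖ ≤ (C + C') * ψ t ^ (-m) := by
    filter_upwards [Filter.eventually_ge_atTop T₀, Filter.eventually_ge_atTop T₁,
      hψ.eventually_ge_atTop 1] with t h0 h1 hψ1
    have hFt : F t = (g t - ∑ k, ψ t ^ (-(γ k)) • p' k (φ t))
        - (g t - ∑ k, ψ t ^ (-(γ k)) • p k (φ t)) := by
      rw [hFdef]
      simp only [hQdef, smul_sub, Finset.sum_sub_distrib]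
      abel
    rw [hFt]
    have hμm : ψ t ^ (-μ) ≤ ψ t ^ (-m) :=
      Real.rpow_le_rpow_of_exponent_le hψ1 (by simp [hm])
    have hμ'm : ψ t ^ (-μ') ≤ ψ t ^ (-m) :=
      Real.rpow_le_rpow_of_exponent_le hψ1 (by simp [hm])
    calc ‖_ - _‖ ≤ ‖g t - ∑ k, ψ t ^ (-(γ k)) • p' k (φ t)‖
          + ‖g t - ∑ k, ψ t ^ (-(γ k)) • p k (φ t)‖ := norm_sub_le _ _
      _ ≤ C' * ψ t ^ (-μ') + C * ψ t ^ (-μ) := add_le_add (hb' t h1) (hb t h0)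
      _ ≤ C' * ψ t ^ (-m) + C * ψ t ^ (-m) := by
          gcongr
      _ = (C + C') * ψ t ^ (-m) := by ring
  have hzero : ∀ j : ℕ, ∀ hj : j < N, ∀ s, Q ⟨j, hj⟩ s = 0 := by
    intro j
    induction j using Nat.strong_induction_on with
    | _ j ih =>
      intro hj
      set J : Fin N := ⟨j, hj⟩ with hJ
      -- ψ^{γ J} • F t → 0
      have hγJm : γ J < m := lt_min (hμ J) (hμ' J)
      have h1 : Filter.Tendsto (fun t => ψ t ^ (γ J) • F t) Filter.atTop (nhds 0) := by
        have hlim : Filter.Tendsto (fun t => (C + C') * ψ t ^ (γ J - m))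
            Filter.atTop (nhds 0) := by
          have h0 : Filter.Tendsto (fun x : ℝ => x ^ (γ J - m)) Filter.atTop
              (nhds 0) := by
            have := tendsto_rpow_neg_atTop (y := m - γ J) (by linarith)
            simpa [neg_sub] using this
          have := (h0.comp hψ).const_mul (C + C')
          simpa [Function.comp, mul_zero] using this
        apply squeeze_zero_norm' ?_ hlim
        filter_upwards [hF, hψ.eventually_ge_atTop 1] with t hFt hψ1
        have hψ0 : (0:ℝ) < ψ t := by linarith
        rw [norm_smul, Real.norm_eq_abs, abs_of_pos (Real.rpow_pos_of_pos hψ0 _)]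
        calc ψ t ^ γ J * ‖F t‖ ≤ ψ t ^ γ J * ((C + C') * ψ t ^ (-m)) := by
              exact mul_le_mul_of_nonneg_left hFt (Real.rpow_nonneg hψ0.le _)
          _ = (C + C') * ψ t ^ (γ J - m) := by
              rw [sub_eq_add_neg, Real.rpow_add hψ0]; ring
      -- the tail sum tends to 0
      set bigS : Finset (Fin N) := Finset.univ.filter (fun k : Fin N => j < k.val)
        with hbigS
      have h2 : Filter.Tendsto
          (fun t => ∑ k ∈ bigS, ψ t ^ (γ J - γ k) • Q k (φ t))
          Filter.atTop (nhds 0) := by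
        have := tendsto_finset_sum bigS (fun k hk => by
          have hjk : J < k := by
            have := (Finset.mem_filter.1 hk).2
            exact Fin.lt_def.2 this
          have hα : (0:ℝ) < γ k - γ J := sub_pos.2 (hγ hjk)
          have := tendsto_rpow_smul_poly hψ hφ hcomp (hQpoly k) hα
          have heq : (fun t => ψ t ^ (-(γ k - γ J)) • Q k (φ t))
              = fun t => ψ t ^ (γ J - γ k) • Q k (φ t) := by
            funext t; congr 1; ring_nf
          rw [heq] at this
          exact this)
        simpa using this
      -- eventual identity
      have heq : ∀ᶠ t in Filter.atTop,
          ψ t ^ (γ J) • F t - ∑ k ∈ bigS, ψ t ^ (γ J - γ k) • Q k (φ t)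
            = Q J (φ t) := by
        filter_upwards [hψ.eventually_ge_atTop 1] with t hψ1
        have hψ0 : (0:ℝ) < ψ t := by linarith
        have hexp : (fun k : Fin N => ψ t ^ (γ J) • (ψ t ^ (-(γ k)) • Q k (φ t)))
            = fun k => ψ t ^ (γ J - γ k) • Q k (φ t) := by
          funext k
          rw [smul_smul, ← Real.rpow_add hψ0, sub_eq_add_neg]
        have hsplit : ψ t ^ (γ J) • F t
            = ∑ k, ψ t ^ (γ J - γ k) • Q k (φ t) := by
          rw [hFdef, Finset.smul_sum]
          exact Finset.sum_congr rfl fun k _ => congrFun hexp k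
        rw [hsplit, ← Finset.sum_filter_add_sum_filter_not Finset.univ
          (fun k : Fin N => j < k.val) (fun k => ψ t ^ (γ J - γ k) • Q k (φ t))]
        rw [← hbigS]
        have hrest : ∑ k ∈ Finset.univ.filter (fun k : Fin N => ¬ j < k.val),
            ψ t ^ (γ J - γ k) • Q k (φ t) = Q J (φ t) := by
          rw [Finset.sum_eq_single J]
          · rw [sub_self, Real.rpow_zero, one_smul]
          · intro k hk hkJ
            have hk' : k.val < j := by
              have h1 := (Finset.mem_filter.1 hk).2
              have : k.val ≠ j := fun hh => hkJ (Fin.ext hh)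
              omega
            have := ih k.val hk' k.isLt (φ t)
            rw [show (⟨k.val, k.isLt⟩ : Fin N) = k from Fin.eta k k.isLt] at this
            rw [this, smul_zero]
          · intro hJmem
            exact absurd (Finset.mem_filter.2 ⟨Finset.mem_univ J, lt_irrefl j⟩) hJmem
        rw [hrest]
        abel
      have hQJ : Filter.Tendsto (fun t => Q J (φ t)) Filter.atTop (nhds 0) := by
        have := h1.sub h2
        rw [sub_zero] at this
        exact this.congr' heq
      -- conclude Q J = 0 via poly_coeff_zero
      obtain ⟨M, a, ha⟩ := hQpoly J
      have hmap : Filter.Tendsto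
          (fun s => ∑ k ∈ Finset.range (M + 1), s ^ k • a k)
          (Filter.map φ Filter.atTop) (nhds 0) := by
        rw [Filter.tendsto_map'_iff]
        refine hQJ.congr fun t => ?_
        rw [Function.comp, ha]
      have hcoeff := poly_coeff_zero M a (Filter.map φ Filter.atTop) hφ hmap
      intro s
      rw [ha]
      refine Finset.sum_eq_zero fun k hk => ?_
      rw [hcoeff k (by simpa [Nat.lt_succ_iff] using Finset.mem_range.1 hk), smul_zero]
  funext k s
  have := hzero k.val k.isLt s
  rw [show (⟨k.val, k.isLt⟩ : Fin N) = k from Fin.eta k k.isLt] at this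
  exact sub_eq_zero.1 this
end

section
/- Let A be a diagonalizable n×n real matrix with positive eigenvalues, m ∈ ℤ≥0, k ∈ ℕ, t₀ > E_{m+k}(0), p ∈ P(k, ℝⁿ) (a finite linear combination of real powers of its k variables), and g ∈ C([t₀,∞), ℝⁿ) with |g(t)| = O(L_m(t)^{-α}) for some α > 0. If y ∈ C([t₀,∞), ℝⁿ) solves y' = −Ay + p(L_{m+1}(t),…,L_{m+k}(t)) + g(t) on (t₀,∞), then there exists δ > 0 such that |y(t) − A^{-1} p(L_{m+1}(t),…,L_{m+k}(t))| = O(L_m(t)^{-δ}). -/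
/-- The class `P(k,X)` of finite sums of real-power monomials. -/
def MemP {X : Type*} [AddCommGroup X] [Module ℝ X] (k : ℕ)
    (p : (Fin k → ℝ) → X) : Prop :=
  ∃ (I : Finset (Fin k → ℝ)) (c : (Fin k → ℝ) → X), I.Nonempty ∧
    ∀ z : Fin k → ℝ, (∀ j, 0 < z j) →
      p z = ∑ α ∈ I, (∏ j, z j ^ α j) • c α

open Set Filter

/-! ### Iterated log basics -/

lemma itLog_add_one (n : ℕ) (t : ℝ) : itLog (n+1) t = Real.log (itLog n t) := rfl

lemma itExp_exp (n : ℕ) (x : ℝ) : itExp n (Real.exp x) = Real.exp (itExp n x) := by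
  induction n with
  | zero => rfl
  | succ n ih => simp [itExp, ih]

lemma lt_itLog (n : ℕ) (x t : ℝ) (h : itExp n x < t) : x < itLog n t := by
  induction n generalizing x t with
  | zero => exact h
  | succ n ih =>
    have h1 : itExp n (Real.exp x) < t := by rwa [itExp_exp]
    have h2 := ih _ _ h1
    have hpos : 0 < itLog n t := lt_trans (Real.exp_pos x) h2
    exact (Real.lt_log_iff_exp_lt hpos).2 h2

lemma itExp_zero_mono : Monotone (fun n => itExp n 0) := by
  apply monotone_nat_of_le_succ
  intro n
  have := Real.add_one_le_exp (itExp n 0)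
  simp only [itExp]
  linarith

lemma tendsto_itLog (n : ℕ) : Tendsto (itLog n) atTop atTop := by
  induction n with
  | zero => exact tendsto_id
  | succ n ih => exact Real.tendsto_log_atTop.comp ih

lemma hasDerivAt_itLog (n : ℕ) (t : ℝ) (ht : ∀ i < n, 0 < itLog i t) :
    HasDerivAt (itLog n) (∏ i ∈ Finset.range n, itLog i t)⁻¹ t := by
  induction n with
  | zero => simp only [Finset.range_zero, Finset.prod_empty, inv_one]; exact hasDerivAt_id' t
  | succ n ih =>
    have h0 : 0 < itLog n t := ht n (Nat.lt_succ_self n)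
    have ihh := ih (fun i hi => ht i (hi.trans (Nat.lt_succ_self n)))
    have := (Real.hasDerivAt_log h0.ne').comp t ihh
    have heq : (itLog n t)⁻¹ * (∏ i ∈ Finset.range n, itLog i t)⁻¹
        = (∏ i ∈ Finset.range (n+1), itLog i t)⁻¹ := by
      rw [Finset.prod_range_succ, mul_inv, mul_comm]
    rw [heq] at this
    exact this

lemma itLog_anti (t : ℝ) (N : ℕ) (h : ∀ i < N, 1 ≤ itLog i t) :
    ∀ a b : ℕ, a ≤ b → b < N → itLog b t ≤ itLog a t := by
  intro a b hab hb
  induction b with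
  | zero => obtain rfl : a = 0 := Nat.le_zero.1 hab; exact le_rfl
  | succ b ih =>
    rcases Nat.lt_succ_iff_lt_or_eq.1 (Nat.lt_succ_of_le hab) with hlt | rfl
    · have h1 : itLog (b+1) t ≤ itLog b t := by
        rw [itLog_add_one]
        exact Real.log_le_self (le_trans zero_le_one (h b (by omega)))
      exact le_trans h1 (ih (by omega) (by omega))
    · exact le_rfl

lemma itLog_le_prod (t : ℝ) (N a b : ℕ) (h : ∀ i < N, 1 ≤ itLog i t)
    (hab : a < b) (hb : b ≤ N) : itLog a t ≤ ∏ i ∈ Finset.range b, itLog i t := by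
  rw [← Finset.mul_prod_erase (Finset.range b) (fun i => itLog i t)
    (Finset.mem_range.2 hab)]
  have h1 : (1:ℝ) ≤ ∏ i ∈ (Finset.range b).erase a, itLog i t := by
    have := Finset.prod_le_prod (s := (Finset.range b).erase a)
      (f := fun _ => (1:ℝ)) (g := fun i => itLog i t)
      (fun i _ => zero_le_one)
      (fun i hi => h i (lt_of_lt_of_le (Finset.mem_range.1 (Finset.mem_of_mem_erase hi)) hb))
    simpa using this
  have h2 : (0:ℝ) ≤ itLog a t := le_trans zero_le_one (h a (lt_of_lt_of_le hab hb))
  nlinarith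

/-! ### Scalar decay via barrier comparison -/

lemma scalar_decay (lam : ℝ) (hlam : 0 < lam) (T : ℝ) (v h ψ ψ' : ℝ → ℝ)
    (hv : ContinuousOn v (Ici T))
    (hdv : ∀ t ≥ T, HasDerivAt v (-lam * v t + h t) t)
    (hψpos : ∀ t ≥ T, 0 < ψ t)
    (hψcont : ContinuousOn ψ (Ici T))
    (hψd : ∀ t ≥ T, HasDerivAt ψ (ψ' t) t)
    (hψ' : ∀ t ≥ T, -(lam/2) * ψ t ≤ ψ' t)
    (c : ℝ) (hh : ∀ t ≥ T, |h t| ≤ c * ψ t) :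
    ∃ C > 0, ∀ t ≥ T, |v t| ≤ C * ψ t := by
  have hψT := hψpos T le_rfl
  set K : ℝ := max (2 * |c| / lam + 1) (|v T| / ψ T + 1) with hK
  have hKc : 2 * |c| / lam + 1 ≤ K := le_max_left _ _
  have hKpos : 0 < K := lt_of_lt_of_le (by positivity) hKc
  have hKT : |v T| ≤ K * ψ T := by
    have h1 : |v T| / ψ T + 1 ≤ K := le_max_right _ _
    have h2 : |v T| / ψ T ≤ K := by linarith
    calc |v T| = (|v T| / ψ T) * ψ T := by field_simp
    _ ≤ K * ψ T := mul_le_mul_of_nonneg_right h2 hψT.le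
  have hcK : c * 2 < K * lam := by
    have h2 : 2 * |c| = (2 * |c| / lam) * lam := by field_simp
    nlinarith [le_abs_self c]
  have main : ∀ (w hw : ℝ → ℝ), ContinuousOn w (Ici T) →
      (∀ t ≥ T, HasDerivAt w (-lam * w t + hw t) t) →
      (∀ t ≥ T, |hw t| ≤ c * ψ t) → w T ≤ K * ψ T →
      ∀ t ≥ T, w t ≤ K * ψ t := by
    intro w hw hwc hwd hwh hwT t ht
    have H := image_le_of_deriv_right_lt_deriv_boundary'
        (f := w) (f' := fun x => -lam * w x + hw x) (a := T) (b := t)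
        (B := fun x => K * ψ x) (B' := fun x => K * ψ' x)
        (hwc.mono Icc_subset_Ici_self)
        (fun x hx => (hwd x hx.1).hasDerivWithinAt)
        hwT
        ((hψcont.mono Icc_subset_Ici_self).const_smul K)
        (fun x hx => ((hψd x hx.1).const_mul K).hasDerivWithinAt)
        (by
          intro x hx hcontact
          have hx1 := hx.1
          have hψx := hψpos x hx1
          have hb := hwh x hx1
          have hb' := hψ' x hx1
          rw [hcontact]
          have hcb : hw x ≤ c * ψ x := le_trans (le_abs_self _) hb
          nlinarith)
    exact H ⟨ht, le_rfl⟩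
  refine ⟨K, hKpos, fun t ht => ?_⟩
  have h1 := main v h hv hdv hh (le_trans (le_abs_self _) hKT) t ht
  have h2 := main (fun s => -v s) (fun s => -h s)
      hv.neg
      (fun s hs => by
        have := (hdv s hs).neg
        refine this.congr_deriv ?_
        show -(-lam * v s + h s) = -lam * -(v s) + -(h s)
        ring)
      (fun s hs => by simpa using hh s hs)
      (le_trans (neg_le_abs _) hKT) t ht
  rw [abs_le]
  exact ⟨by linarith, h1⟩

/-! ### Monomials in iterated logs -/

noncomputable def Dval (n : ℕ) (t : ℝ) : ℝ := (∏ i ∈ Finset.range n, itLog i t)⁻¹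

noncomputable def Mo (m k : ℕ) (a : Fin k → ℝ) (t : ℝ) : ℝ :=
  Real.exp (∑ j, a j * itLog (m+2+(j:ℕ)) t)

lemma hasDerivAt_Mo (m k : ℕ) (a : Fin k → ℝ) (t : ℝ)
    (h : ∀ i < m+k+2, 0 < itLog i t) :
    HasDerivAt (Mo m k a) (Mo m k a t * ∑ j, a j * Dval (m+2+(j:ℕ)) t) t := by
  have inner : HasDerivAt (fun t => ∑ j : Fin k, a j * itLog (m+2+(j:ℕ)) t)
      (∑ j : Fin k, a j * Dval (m+2+(j:ℕ)) t) t := by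
    apply HasDerivAt.fun_sum
    intro j _
    exact (hasDerivAt_itLog (m+2+(j:ℕ)) t
      (fun i hi => h i (by omega))).const_mul (a j)
  exact inner.exp

lemma prod_rpow_eq_Mo (m k : ℕ) (a : Fin k → ℝ) (t : ℝ)
    (h : ∀ j : Fin k, 0 < itLog (m+1+(j:ℕ)) t) :
    (∏ j : Fin k, itLog (m+1+(j:ℕ)) t ^ a j) = Mo m k a t := by
  rw [Mo, Real.exp_sum]
  apply Finset.prod_congr rfl
  intro j _
  rw [Real.rpow_def_of_pos (h j)]
  congr 1
  have he : m+2+(j:ℕ) = (m+1+(j:ℕ))+1 := by omega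
  rw [he, itLog_add_one, mul_comm]
set_option maxHeartbeats 2000000

/-- Lemma 2.7: for `y' = -Ay + p(L_{m+1}(t),…,L_{m+k}(t)) + g(t)` with
`|g(t)| = O(L_m(t)^{-α})`, one has `|y(t) - A⁻¹p(L_{m+1}(t),…,L_{m+k}(t))| = O(L_m(t)^{-δ})`
for some `δ > 0`. -/
theorem stmt11 (n m k : ℕ) (hn : 0 < n) (hk : 1 ≤ k)
    (S : Matrix (Fin n) (Fin n) ℝ) (hS : IsUnit S)
    (Λ : Fin n → ℝ) (hΛ : ∀ i, 0 < Λ i)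
    (A : Matrix (Fin n) (Fin n) ℝ) (hA : A = S⁻¹ * Matrix.diagonal Λ * S)
    (t₀ : ℝ) (ht₀ : itExp (m + k) 0 < t₀)
    (p : (Fin k → ℝ) → (Fin n → ℝ)) (hp : MemP k p)
    (α : ℝ) (hα : 0 < α)
    (g : ℝ → Fin n → ℝ) (hgcont : ContinuousOn g (Set.Ici t₀))
    (hg : ∃ C T : ℝ, 0 < C ∧ ∀ t ≥ T, ‖g t‖ ≤ C * itLog m t ^ (-α))
    (y : ℝ → Fin n → ℝ) (hycont : ContinuousOn y (Set.Ici t₀))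
    (hode : ∀ t > t₀, HasDerivAt y
      (-(A.mulVec (y t)) + p (fun j => itLog (m + 1 + (j : ℕ)) t) + g t) t) :
    ∃ δ > (0:ℝ), ∃ C T : ℝ, 0 < C ∧ ∀ t ≥ T,
      ‖y t - A⁻¹.mulVec (p (fun j => itLog (m + 1 + (j : ℕ)) t))‖ ≤
        C * itLog m t ^ (-δ) := by
  classical
  obtain ⟨I, c, hI, hrep⟩ := hp
  obtain ⟨Cg, Tg, hCg, hgbd⟩ := hg
  have hFin : Nonempty (Fin n) := ⟨⟨0, hn⟩⟩
  have hdet : IsUnit S.det := (Matrix.isUnit_iff_isUnit_det S).1 hS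
  -- constants
  set δ : ℝ := min α (1/2) with hδdef
  have hδpos : 0 < δ := lt_min hα (by norm_num)
  have hδα : δ ≤ α := min_le_left _ _
  have hδhalf : δ ≤ 1/2 := min_le_right _ _
  set lam0 : ℝ := Finset.univ.inf' Finset.univ_nonempty Λ with hlam0def
  have hlam0le : ∀ i, lam0 ≤ Λ i := fun i => Finset.inf'_le _ (Finset.mem_univ i)
  have hlam0 : 0 < lam0 := by
    obtain ⟨i, _, hi⟩ := Finset.exists_mem_eq_inf' (Finset.univ_nonempty (α := Fin n)) Λ
    rw [hlam0def, hi]; exact hΛ i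
  set N : ℕ := m + k + 2 with hNdef
  set Φ : ℝ → ℝ := fun t => itLog (m+1) t with hΦdef
  set ψ : ℝ → ℝ := fun t => Real.exp (-δ * Φ t) with hψdef
  set Amax : ℝ := I.sup' hI (fun a => ∑ j, |a j|) with hAmaxdef
  have hAmax_ge : ∀ a ∈ I, (∑ j, |a j|) ≤ Amax := fun a ha => Finset.le_sup' (f := fun a : Fin k → ℝ => ∑ j, |a j|) ha
  have hAmax_nonneg : 0 ≤ Amax := by
    obtain ⟨a, ha⟩ := hI
    exact le_trans (Finset.sum_nonneg fun j _ => abs_nonneg _) (hAmax_ge a ha)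
  -- eventual facts and choice of T
  have ev1 : ∀ᶠ t in atTop, ∀ i ∈ Finset.range N, 1 ≤ itLog i t :=
    (Finset.range N).eventually_all.2 fun i _ => (tendsto_itLog i).eventually_ge_atTop 1
  have ev2 : ∀ᶠ t in atTop, Amax * itLog (m+2) t ≤ (1/2) * itLog (m+1) t := by
    have hxev : ∀ᶠ x : ℝ in atTop, Amax * Real.log x ≤ (1/2) * x := by
      have h1 : (fun x : ℝ => Amax * Real.log x) =o[atTop] (fun x : ℝ => x) := by
        exact Real.isLittleO_log_id_atTop.const_mul_left Amax
      have h2 := h1.def (c := 1/2) (by norm_num)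
      filter_upwards [h2, eventually_ge_atTop (0:ℝ)] with x hx hx0
      calc Amax * Real.log x ≤ |Amax * Real.log x| := le_abs_self _
        _ = |Amax| * |Real.log x| := abs_mul _ _
        _ ≤ 1/2 * |x| := by simpa [Real.norm_eq_abs, abs_mul] using hx
        _ = 1/2 * x := by rw [abs_of_nonneg hx0]
    filter_upwards [(tendsto_itLog (m+1)).eventually hxev] with t ht
    have he : m+2 = (m+1)+1 := by omega
    rw [he, itLog_add_one]
    exact ht
  have ev3 : ∀ᶠ t in atTop, 2*δ/lam0 ≤ itLog m t := (tendsto_itLog m).eventually_ge_atTop _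
  obtain ⟨T, hTall⟩ := (((ev1.and (ev2.and ev3)).and
    (eventually_ge_atTop (max (t₀+1) Tg))).and (eventually_ge_atTop t₀)).exists_forall_of_atTop
  have hTprop : ∀ t ≥ T, (∀ i < N, 1 ≤ itLog i t) ∧
      Amax * itLog (m+2) t ≤ (1/2) * itLog (m+1) t ∧ 2*δ/lam0 ≤ itLog m t ∧
      t₀ + 1 ≤ t ∧ Tg ≤ t := by
    intro t ht
    obtain ⟨⟨⟨h1, h2, h3⟩, h4⟩, _⟩ := hTall t ht
    exact ⟨fun i hi => h1 i (Finset.mem_range.2 hi), h2, h3,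
      le_trans (le_max_left _ _) h4, le_trans (le_max_right _ _) h4⟩
  have hTt₀ : ∀ t ≥ T, t₀ < t := fun t ht => by linarith [(hTprop t ht).2.2.2.1]
  have hpos : ∀ t ≥ T, ∀ i < N, 0 < itLog i t :=
    fun t ht i hi => lt_of_lt_of_le zero_lt_one ((hTprop t ht).1 i hi)
  -- positivity of the iterated-log arguments
  have hargpos : ∀ t > t₀, ∀ j : Fin k, 0 < itLog (m+1+(j:ℕ)) t := by
    intro t ht j
    have h1 : itExp (m+1+(j:ℕ)) 0 ≤ itExp (m+k) 0 := itExp_zero_mono (by omega)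
    exact lt_itLog _ 0 t (lt_of_le_of_lt h1 (ht₀.trans ht))
  -- the coefficient data
  set d : Fin n → (Fin k → ℝ) → ℝ := fun i a => ∑ l, S i l * c a l with hddef
  set q : Fin n → ℝ → ℝ := fun i t => ∑ a ∈ I, d i a * Mo m k a t with hqdef
  set R : (Fin k → ℝ) → ℝ → ℝ := fun a t => ∑ j, a j * Dval (m+2+(j:ℕ)) t with hRdef
  set q' : Fin n → ℝ → ℝ := fun i t => ∑ a ∈ I, d i a * (Mo m k a t * R a t) with hq'def
  set u : Fin n → ℝ → ℝ := fun i t => ∑ l, S i l * y t l with hudef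
  set r : Fin n → ℝ → ℝ := fun i t => ∑ l, S i l * g t l with hrdef
  set v : Fin n → ℝ → ℝ := fun i t => u i t - (Λ i)⁻¹ * q i t with hvdef
  set h : Fin n → ℝ → ℝ := fun i t => r i t - (Λ i)⁻¹ * q' i t with hhdef
  -- identification of p with the monomial sum
  have hPq : ∀ t > t₀, ∀ i, (S.mulVec (p (fun j => itLog (m+1+(j:ℕ)) t))) i = q i t := by
    intro t ht i
    have hz := hargpos t ht
    have hzrep := hrep (fun j => itLog (m+1+(j:ℕ)) t) hz
    simp only [Matrix.mulVec, dotProduct, hzrep, Finset.sum_apply, Pi.smul_apply,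
      smul_eq_mul, Finset.mul_sum, hqdef, hddef, Finset.sum_mul]
    rw [Finset.sum_comm]
    apply Finset.sum_congr rfl
    intro a _
    rw [← prod_rpow_eq_Mo m k a t hz]
    apply Finset.sum_congr rfl
    intro l _
    ring
  -- derivative of q
  have hqd : ∀ i, ∀ t ≥ T, HasDerivAt (q i) (q' i t) t := by
    intro i t ht
    apply HasDerivAt.fun_sum
    intro a _
    exact (hasDerivAt_Mo m k a t (fun i hi => hpos t ht i (by omega))).const_mul (d i a)
  -- derivative of v
  have hSA : S * A = Matrix.diagonal Λ * S := by
    rw [hA, ← Matrix.mul_assoc, ← Matrix.mul_assoc, Matrix.mul_nonsing_inv _ hdet,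
      Matrix.one_mul]
  have hmv : ∀ z : Fin n → ℝ, ∀ i, (∑ l, S i l * z l) = (S.mulVec z) i := by
    intro z i; simp [Matrix.mulVec, dotProduct]
  have hvd : ∀ i, ∀ t ≥ T, HasDerivAt (v i) (-(Λ i) * v i t + h i t) t := by
    intro i t ht
    have hyd := hode t (hTt₀ t ht)
    have hud : HasDerivAt (u i)
        (∑ l, S i l * ((-(A.mulVec (y t)) + p (fun j => itLog (m+1+(j:ℕ)) t) + g t) l)) t := by
      rw [hudef]
      exact HasDerivAt.fun_sum (fun l _ => ((hasDerivAt_pi.1 hyd) l).const_mul (S i l))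
    have hsum : (∑ l, S i l * ((-(A.mulVec (y t)) + p (fun j => itLog (m+1+(j:ℕ)) t) + g t) l))
        = -(Λ i) * u i t + q i t + r i t := by
      have eX : (S.mulVec (A.mulVec (y t))) i = Λ i * u i t := by
        rw [Matrix.mulVec_mulVec, hSA, ← Matrix.mulVec_mulVec, Matrix.mulVec_diagonal]
        simp only [hudef]
        rw [hmv (y t) i]
      have eY := hPq t (hTt₀ t ht) i
      have eN : (∑ l, S i l * (-(A.mulVec (y t)) l)) = -(Λ i * u i t) := by
        rw [← eX, ← hmv (A.mulVec (y t)) i, ← Finset.sum_neg_distrib]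
        apply Finset.sum_congr rfl
        intro l _
        simp
      calc (∑ l, S i l * ((-(A.mulVec (y t)) + p (fun j => itLog (m+1+(j:ℕ)) t) + g t) l))
          = (∑ l, S i l * (-(A.mulVec (y t)) l)) + (∑ l, S i l * (p (fun j => itLog (m+1+(j:ℕ)) t)) l)
            + (∑ l, S i l * g t l) := by
            rw [← Finset.sum_add_distrib, ← Finset.sum_add_distrib]
            apply Finset.sum_congr rfl
            intro l _
            simp only [Pi.add_apply, Pi.neg_apply]
            ring
        _ = -(Λ i) * u i t + q i t + r i t := by
            rw [eN, hmv (p (fun j => itLog (m+1+(j:ℕ)) t)) i, eY]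
            simp only [hrdef]
            ring
    have hqd' := hqd i t ht
    have hvd1 : HasDerivAt (v i)
        ((-(Λ i) * u i t + q i t + r i t) - (Λ i)⁻¹ * q' i t) t := by
      rw [hvdef]
      rw [← hsum]
      exact hud.sub (hqd'.const_mul ((Λ i)⁻¹))
    convert hvd1 using 1
    rw [hvdef, hhdef]
    have hΛne : Λ i ≠ 0 := (hΛ i).ne'
    field_simp
    ring
  -- derivative of ψ
  set ψ' : ℝ → ℝ := fun t => ψ t * (-δ * Dval (m+1) t) with hψ'def
  have hψd : ∀ t ≥ T, HasDerivAt ψ (ψ' t) t := by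
    intro t ht
    exact ((hasDerivAt_itLog (m+1) t (fun i hi => hpos t ht i (by omega))).const_mul
      (-δ)).exp
  have hψpos : ∀ t ≥ T, 0 < ψ t := fun t _ => Real.exp_pos _
  have hΦ1 : ∀ t ≥ T, 1 ≤ Φ t := fun t ht => (hTprop t ht).1 (m+1) (by omega)
  -- key bounds
  have hexpΦ : ∀ t ≥ T, Real.exp (-Φ t) = (itLog m t)⁻¹ := by
    intro t ht
    have h2 : 0 < itLog m t := hpos t ht m (by omega)
    simp only [hΦdef]
    rw [itLog_add_one, Real.exp_neg, Real.exp_log h2]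
  have hDle : ∀ t ≥ T, ∀ n', m < n' → n' ≤ N → Dval n' t ≤ Real.exp (-Φ t) := by
    intro t ht n' hmn' hn'
    have h1 : itLog m t ≤ ∏ i ∈ Finset.range n', itLog i t :=
      itLog_le_prod t N m n' (hTprop t ht).1 hmn' hn'
    have h2 : 0 < itLog m t := hpos t ht m (by omega)
    rw [hexpΦ t ht]
    rw [show Dval n' t = (∏ i ∈ Finset.range n', itLog i t)⁻¹ from rfl]
    exact inv_anti₀ h2 h1
  have hDpos : ∀ t ≥ T, ∀ n', n' ≤ N → 0 < Dval n' t := by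
    intro t ht n' hn'
    rw [show Dval n' t = (∏ i ∈ Finset.range n', itLog i t)⁻¹ from rfl]
    apply inv_pos.2
    apply Finset.prod_pos
    intro i hi
    exact hpos t ht i (lt_of_lt_of_le (Finset.mem_range.1 hi) hn')
  have hMole : ∀ t ≥ T, ∀ a ∈ I, Mo m k a t ≤ Real.exp ((1/2) * Φ t) := by
    intro t ht a ha
    have hone := (hTprop t ht).1
    rw [show Mo m k a t = Real.exp (∑ j, a j * itLog (m+2+(j:ℕ)) t) from rfl]
    apply Real.exp_le_exp.2
    calc ∑ j, a j * itLog (m+2+(j:ℕ)) t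
        ≤ ∑ j : Fin k, |a j| * itLog (m+2) t := by
          apply Finset.sum_le_sum
          intro j _
          have hL1 : (0:ℝ) ≤ itLog (m+2+(j:ℕ)) t :=
            le_trans zero_le_one (hone (m+2+(j:ℕ)) (by omega))
          have hL2 : itLog (m+2+(j:ℕ)) t ≤ itLog (m+2) t :=
            itLog_anti t N hone (m+2) (m+2+(j:ℕ)) (by omega) (by omega)
          calc a j * itLog (m+2+(j:ℕ)) t ≤ |a j| * itLog (m+2+(j:ℕ)) t :=
                mul_le_mul_of_nonneg_right (le_abs_self _) hL1
            _ ≤ |a j| * itLog (m+2) t := mul_le_mul_of_nonneg_left hL2 (abs_nonneg _)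
      _ = (∑ j, |a j|) * itLog (m+2) t := by rw [Finset.sum_mul]
      _ ≤ Amax * itLog (m+2) t := by
          apply mul_le_mul_of_nonneg_right (hAmax_ge a ha)
          exact le_trans zero_le_one (hone (m+2) (by omega))
      _ ≤ (1/2) * Φ t := (hTprop t ht).2.1
  have hψ'bd : ∀ i, ∀ t ≥ T, -(Λ i / 2) * ψ t ≤ ψ' t := by
    intro i t ht
    have hψt := hψpos t ht
    have hLm : 2*δ/lam0 ≤ itLog m t := (hTprop t ht).2.2.1
    have hLmpos : 0 < itLog m t := hpos t ht m (by omega)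
    have key : δ * Dval (m+1) t ≤ Λ i / 2 := by
      have h1 : Dval (m+1) t ≤ (itLog m t)⁻¹ := by
        rw [← hexpΦ t ht]
        exact hDle t ht (m+1) (by omega) (by omega)
      have hL2 : 2*δ ≤ lam0 * itLog m t := by
        have h3 := (div_le_iff₀ hlam0).1 hLm
        linarith
      have h2 : δ * (itLog m t)⁻¹ ≤ lam0 / 2 := by
        rw [← div_eq_mul_inv, div_le_iff₀ hLmpos]
        nlinarith
      calc δ * Dval (m+1) t ≤ δ * (itLog m t)⁻¹ := mul_le_mul_of_nonneg_left h1 hδpos.le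
        _ ≤ lam0/2 := h2
        _ ≤ Λ i / 2 := by linarith [hlam0le i]
    rw [hψ'def]
    have hkey2 := mul_le_mul_of_nonneg_right key hψt.le
    nlinarith
  set cb : Fin n → ℝ := fun i =>
    (∑ l, |S i l|) * Cg + (Λ i)⁻¹ * ((∑ a ∈ I, |d i a|) * Amax) with hcbdef
  have hhbd : ∀ i, ∀ t ≥ T, |h i t| ≤ cb i * ψ t := by
    intro i t ht
    have hψt := hψpos t ht
    have hΦt := hΦ1 t ht
    have hrb : |r i t| ≤ (∑ l, |S i l|) * Cg * ψ t := by
      have hgt := hgbd t (hTprop t ht).2.2.2.2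
      have h1 : |r i t| ≤ (∑ l, |S i l|) * ‖g t‖ := by
        rw [hrdef, Finset.sum_mul]
        refine le_trans (Finset.abs_sum_le_sum_abs _ _) ?_
        apply Finset.sum_le_sum
        intro l _
        rw [abs_mul]
        apply mul_le_mul_of_nonneg_left _ (abs_nonneg _)
        exact (Real.norm_eq_abs (g t l)) ▸ norm_le_pi_norm (g t) l
      have h3 : itLog m t ^ (-α) ≤ ψ t := by
        have hLmpos : 0 < itLog m t := hpos t ht m (by omega)
        rw [Real.rpow_def_of_pos hLmpos, hψdef]
        apply Real.exp_le_exp.2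
        have hlogΦ : Real.log (itLog m t) = Φ t := by
          simp only [hΦdef]
          rw [itLog_add_one]
        rw [hlogΦ]
        nlinarith
      have hg0 : (0:ℝ) ≤ ∑ l, |S i l| := Finset.sum_nonneg fun l _ => abs_nonneg _
      calc |r i t| ≤ (∑ l, |S i l|) * ‖g t‖ := h1
        _ ≤ (∑ l, |S i l|) * (Cg * ψ t) := by
            apply mul_le_mul_of_nonneg_left _ hg0
            calc ‖g t‖ ≤ Cg * itLog m t ^ (-α) := hgt
              _ ≤ Cg * ψ t := mul_le_mul_of_nonneg_left h3 hCg.le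
        _ = (∑ l, |S i l|) * Cg * ψ t := by ring
    have hq'b : |q' i t| ≤ (∑ a ∈ I, |d i a|) * Amax * ψ t := by
      rw [hq'def]
      refine le_trans (Finset.abs_sum_le_sum_abs _ _) ?_
      have hterm : ∀ a ∈ I, |d i a * (Mo m k a t * R a t)| ≤ |d i a| * (Amax * ψ t) := by
        intro a ha
        rw [abs_mul]
        apply mul_le_mul_of_nonneg_left _ (abs_nonneg _)
        rw [abs_mul]
        have hMo := hMole t ht a ha
        have hMopos : 0 < Mo m k a t := Real.exp_pos _
        rw [abs_of_pos hMopos]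
        have hRb : |R a t| ≤ Amax * Real.exp (-Φ t) := by
          rw [hRdef]
          refine le_trans (Finset.abs_sum_le_sum_abs _ _) ?_
          calc ∑ j, |a j * Dval (m+2+(j:ℕ)) t| ≤ ∑ j : Fin k, |a j| * Real.exp (-Φ t) := by
                apply Finset.sum_le_sum
                intro j _
                rw [abs_mul]
                apply mul_le_mul_of_nonneg_left _ (abs_nonneg _)
                rw [abs_of_pos (hDpos t ht _ (by omega))]
                exact hDle t ht (m+2+(j:ℕ)) (by omega) (by omega)
            _ = (∑ j, |a j|) * Real.exp (-Φ t) := by rw [Finset.sum_mul]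
            _ ≤ Amax * Real.exp (-Φ t) :=
                mul_le_mul_of_nonneg_right (hAmax_ge a ha) (Real.exp_pos _).le
        calc Mo m k a t * |R a t| ≤ Real.exp ((1/2) * Φ t) * (Amax * Real.exp (-Φ t)) :=
              mul_le_mul hMo hRb (abs_nonneg _) (Real.exp_pos _).le
          _ = Amax * Real.exp ((1/2) * Φ t + (-Φ t)) := by rw [Real.exp_add]; ring
          _ ≤ Amax * ψ t := by
              apply mul_le_mul_of_nonneg_left _ hAmax_nonneg
              rw [hψdef]
              apply Real.exp_le_exp.2
              nlinarith
      calc ∑ a ∈ I, |d i a * (Mo m k a t * R a t)| ≤ ∑ a ∈ I, |d i a| * (Amax * ψ t) :=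
            Finset.sum_le_sum hterm
        _ = (∑ a ∈ I, |d i a|) * Amax * ψ t := by rw [← Finset.sum_mul]; ring
    have hΛinv : (0:ℝ) < (Λ i)⁻¹ := inv_pos.2 (hΛ i)
    rw [hhdef, hcbdef]
    calc |r i t - (Λ i)⁻¹ * q' i t| ≤ |r i t| + |(Λ i)⁻¹ * q' i t| := abs_sub _ _
      _ = |r i t| + (Λ i)⁻¹ * |q' i t| := by rw [abs_mul, abs_of_pos hΛinv]
      _ ≤ (∑ l, |S i l|) * Cg * ψ t + (Λ i)⁻¹ * ((∑ a ∈ I, |d i a|) * Amax * ψ t) := by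
          have := mul_le_mul_of_nonneg_left hq'b hΛinv.le
          linarith
      _ = ((∑ l, |S i l|) * Cg + (Λ i)⁻¹ * ((∑ a ∈ I, |d i a|) * Amax)) * ψ t := by ring
  -- continuity
  have hvcont : ∀ i, ContinuousOn (v i) (Ici T) :=
    fun i t ht => ((hvd i t ht).continuousAt).continuousWithinAt
  have hψcont : ContinuousOn ψ (Ici T) :=
    fun t ht => ((hψd t ht).continuousAt).continuousWithinAt
  -- scalar decay for each coordinate
  have hscal : ∀ i, ∃ C > 0, ∀ t ≥ T, |v i t| ≤ C * ψ t := by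
    intro i
    refine scalar_decay (Λ i) (hΛ i) T (v i) (h i) ψ ψ' (hvcont i) ?_ hψpos hψcont hψd
      (hψ'bd i) (cb i) (hhbd i)
    intro t ht
    exact hvd i t ht
  choose C' hC'pos hC'bd using hscal
  -- final assembly
  set CS : ℝ := ∑ i, ∑ l, |S⁻¹ i l| with hCSdef
  set CV : ℝ := ∑ i, C' i with hCVdef
  have hCVpos : 0 < CV := Finset.sum_pos (fun i _ => hC'pos i) Finset.univ_nonempty
  have hCSnn : 0 ≤ CS :=
    Finset.sum_nonneg fun i _ => Finset.sum_nonneg fun l _ => abs_nonneg _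
  refine ⟨δ, hδpos, (CS+1) * CV, T, mul_pos (by linarith) hCVpos, ?_⟩
  intro t ht
  have hψt := hψpos t ht
  have hLmpos : 0 < itLog m t := hpos t ht m (by omega)
  have hψeq : itLog m t ^ (-δ) = ψ t := by
    rw [Real.rpow_def_of_pos hLmpos]
    simp only [hψdef, hΦdef]
    rw [itLog_add_one, mul_comm]
  have hSiS : S⁻¹ * S = 1 := Matrix.nonsing_inv_mul _ hdet
  have hAinv : A⁻¹ = S⁻¹ * ((Matrix.diagonal Λ)⁻¹ * S) := by
    rw [hA, Matrix.mul_inv_rev, Matrix.mul_inv_rev, Matrix.nonsing_inv_nonsing_inv _ hdet]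
  have hSAinv : S * A⁻¹ = (Matrix.diagonal Λ)⁻¹ * S := by
    rw [hAinv, ← Matrix.mul_assoc, Matrix.mul_nonsing_inv _ hdet, Matrix.one_mul]
  have hDinv : (Matrix.diagonal Λ)⁻¹ = Matrix.diagonal (fun i => (Λ i)⁻¹) := by
    apply Matrix.inv_eq_right_inv
    rw [Matrix.diagonal_mul_diagonal,
      show (fun i => Λ i * (Λ i)⁻¹) = fun _ : Fin n => (1:ℝ) from
        funext fun i => mul_inv_cancel₀ (hΛ i).ne',
      Matrix.diagonal_one]
  have hfact : y t - A⁻¹.mulVec (p (fun j => itLog (m+1+(j:ℕ)) t))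
      = S⁻¹.mulVec (fun i => v i t) := by
    have hw : S.mulVec (y t - A⁻¹.mulVec (p fun j => itLog (m+1+(j:ℕ)) t))
        = fun i => v i t := by
      funext i
      rw [Matrix.mulVec_sub]
      have e2 : (S.mulVec (A⁻¹.mulVec (p fun j => itLog (m+1+(j:ℕ)) t))) i
          = (Λ i)⁻¹ * q i t := by
        rw [Matrix.mulVec_mulVec, hSAinv, hDinv, ← Matrix.mulVec_mulVec,
          Matrix.mulVec_diagonal, hPq t (hTt₀ t ht) i]
      rw [Pi.sub_apply, e2]
      rw [show (S.mulVec (y t)) i = u i t from (hmv (y t) i).symm]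
    rw [← hw, Matrix.mulVec_mulVec, hSiS, Matrix.one_mulVec]
  rw [hfact, hψeq]
  have hbound : ∀ i, ‖(S⁻¹.mulVec (fun j => v j t)) i‖ ≤ (CS+1) * CV * ψ t := by
    intro i
    rw [Real.norm_eq_abs]
    have h1 : |(S⁻¹.mulVec (fun j => v j t)) i| ≤ ∑ l, |S⁻¹ i l| * (C' l * ψ t) := by
      rw [show (S⁻¹.mulVec (fun j => v j t)) i = ∑ l, S⁻¹ i l * v l t by
        simp [Matrix.mulVec, dotProduct]]
      refine le_trans (Finset.abs_sum_le_sum_abs _ _) ?_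
      apply Finset.sum_le_sum
      intro l _
      rw [abs_mul]
      exact mul_le_mul_of_nonneg_left (hC'bd l t ht) (abs_nonneg _)
    have h2 : ∑ l, |S⁻¹ i l| * (C' l * ψ t) ≤ (∑ l, |S⁻¹ i l|) * (CV * ψ t) := by
      rw [Finset.sum_mul]
      apply Finset.sum_le_sum
      intro l _
      apply mul_le_mul_of_nonneg_left _ (abs_nonneg _)
      apply mul_le_mul_of_nonneg_right _ hψt.le
      exact Finset.single_le_sum (f := C') (fun j _ => (hC'pos j).le) (Finset.mem_univ l)
    have h3 : (∑ l, |S⁻¹ i l|) ≤ CS + 1 := by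
      have := Finset.single_le_sum (f := fun i => ∑ l, |S⁻¹ i l|)
        (fun j _ => Finset.sum_nonneg fun l _ => abs_nonneg _) (Finset.mem_univ i)
      rw [hCSdef]
      linarith
    calc |(S⁻¹.mulVec (fun j => v j t)) i| ≤ (∑ l, |S⁻¹ i l|) * (CV * ψ t) :=
          le_trans h1 h2
      _ ≤ (CS+1) * (CV * ψ t) := by
          apply mul_le_mul_of_nonneg_right h3
          positivity
      _ = (CS+1) * CV * ψ t := by ring
  exact pi_norm_le_iff_of_nonneg (by positivity) |>.2 hbound
end
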